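/- arXiv:2307.07073 — 7 statements merged into one kernel-verified Lean document; each statement's English description precedes it below -/
import Mathlib

section
/- For a simplicial complex K with simplicial weight function w on d-simplices and null-homologous (d-1)-cycle γ, the effective resistance R_γ(K) = γ^T (L_{d-1}^{up,W})^+ γ equals the minimum flow energy over all unit γ-flows, i.e. R_γ(K) = min{ f^T W^{-1} f : f ∈ C_d(K), ∂_d f = γ }. -/
open Matrix

/-- An abstract simplicial complex on vertex set `V`: a finite, downward-closed
family of nonempty finite subsets of `V`. -/
structure SComplex (V : Type) where
  faces : Finset (Finset V)
  down_closed : ∀ s ∈ faces, ∀ t ⊆ s, t.Nonempty → t ∈ faces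

/-- The index type of `d`-dimensional simplices (i.e. `(d+1)`-element subsets) on `V`. -/
abbrev SimpIdx (V : Type) (d : ℕ) := {s : Finset V // s.card = d + 1}

variable {V : Type} [Fintype V] [LinearOrder V]

/-- The signed incidence coefficient of the boundary operator: for `τ ⊆ σ` of
codimension one it is `(-1)ⁱ` where `i` is the position of the removed vertex. -/
def bsign (τ σ : Finset V) : ℤ :=
  if τ ⊆ σ ∧ τ.card + 1 = σ.card then
    (-1 : ℤ) ^ (σ.filter (fun w => ∃ v ∈ σ \ τ, w < v)).card
  else 0

/-- The global integral boundary matrix `∂_{d+1}` from `(d+1)`-dimensional to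
`d`-dimensional simplices on the vertex set `V`. -/
def gbdryZ (V : Type) [Fintype V] [LinearOrder V] (d : ℕ) :
    Matrix (SimpIdx V d) (SimpIdx V (d + 1)) ℤ :=
  fun τ σ => bsign (τ : Finset V) (σ : Finset V)

/-- The global real boundary matrix. -/
noncomputable def gbdry (V : Type) [Fintype V] [LinearOrder V] (d : ℕ) :
    Matrix (SimpIdx V d) (SimpIdx V (d + 1)) ℝ :=
  (gbdryZ V d).map (fun z => (z : ℝ))

/-- Diagonal 0/1 matrix indicating membership of simplices in the complex `K`. -/
noncomputable def SComplex.ind (K : SComplex V) (d : ℕ) :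
    Matrix (SimpIdx V d) (SimpIdx V d) ℝ :=
  Matrix.diagonal fun σ => if (σ : Finset V) ∈ K.faces then (1 : ℝ) else 0

/-- The boundary matrix `∂_{d+1}[K]` of the complex `K` (rows and columns outside
`K` are zero). -/
noncomputable def SComplex.bdry (K : SComplex V) (d : ℕ) :
    Matrix (SimpIdx V d) (SimpIdx V (d + 1)) ℝ :=
  K.ind d * gbdry V d * K.ind (d + 1)

/-- A chain is supported on the complex `K`. -/
def SComplex.supportedOn (K : SComplex V) {d : ℕ} (f : SimpIdx V d → ℝ) : Prop :=
  ∀ σ : SimpIdx V d, f σ ≠ 0 → (σ : Finset V) ∈ K.faces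

/-- A `d`-dimensional chain is a cycle (its boundary vanishes; every `0`-chain is a cycle). -/
def IsCycle (V : Type) [Fintype V] [LinearOrder V] : (d : ℕ) → (SimpIdx V d → ℝ) → Prop
  | 0, _ => True
  | (d + 1), γ => gbdry V d *ᵥ γ = 0

/-- A `d`-dimensional cycle `γ` is null-homologous in `K` iff it is the boundary of a
`(d+1)`-chain of `K` (a unit `γ`-flow). -/
def SComplex.NullHomologous (K : SComplex V) (d : ℕ) (γ : SimpIdx V d → ℝ) : Prop :=
  ∃ f : SimpIdx V (d + 1) → ℝ, K.supportedOn f ∧ gbdry V d *ᵥ f = γ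

/-- The weighted effective resistance of `γ` in `K`: the infimum of flow energies
`∑ f(σ)²/w(σ)` over unit `γ`-flows `f` in `K`. -/
noncomputable def SComplex.effResW (K : SComplex V) (d : ℕ)
    (w : SimpIdx V (d + 1) → ℝ) (γ : SimpIdx V d → ℝ) : ℝ :=
  sInf {E : ℝ | ∃ f : SimpIdx V (d + 1) → ℝ, K.supportedOn f ∧ gbdry V d *ᵥ f = γ ∧
    E = ∑ σ : SimpIdx V (d + 1), f σ ^ 2 / w σ}

/-- Unweighted effective resistance. -/
noncomputable def SComplex.effRes (K : SComplex V) (d : ℕ) (γ : SimpIdx V d → ℝ) : ℝ :=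
  K.effResW d (fun _ => 1) γ

/-- The weighted up-Laplacian `L^{up,W} = ∂ W ∂ᵀ` of `K` acting on `d`-chains. -/
noncomputable def SComplex.upLapW (K : SComplex V) (d : ℕ) (w : SimpIdx V (d + 1) → ℝ) :
    Matrix (SimpIdx V d) (SimpIdx V d) ℝ :=
  K.bdry d * Matrix.diagonal w * (K.bdry d)ᵀ

/-- The (unweighted) up-Laplacian `L^{up} = ∂ ∂ᵀ` of `K` acting on `d`-chains. -/
noncomputable def SComplex.upLap (K : SComplex V) (d : ℕ) :
    Matrix (SimpIdx V d) (SimpIdx V d) ℝ :=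
  K.bdry d * (K.bdry d)ᵀ

/-- The down-Laplacian `L^{down} = ∂ᵀ ∂` of `K` acting on `d`-chains (zero on `0`-chains). -/
noncomputable def SComplex.downLap (K : SComplex V) :
    (d : ℕ) → Matrix (SimpIdx V d) (SimpIdx V d) ℝ
  | 0 => 0
  | (d + 1) => (K.bdry d)ᵀ * K.bdry d

/-- The combinatorial Laplacian `L = L^{up} + L^{down}`. -/
noncomputable def SComplex.combLap (K : SComplex V) (d : ℕ) :
    Matrix (SimpIdx V d) (SimpIdx V d) ℝ :=
  K.upLap d + K.downLap d

/-- `X` is the Moore–Penrose pseudoinverse of `A` (the four Penrose conditions). -/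
def IsMoorePenrose {m n : Type} [Fintype m] [Fintype n]
    (A : Matrix m n ℝ) (X : Matrix n m ℝ) : Prop :=
  A * X * A = A ∧ X * A * X = X ∧ (A * X)ᵀ = A * X ∧ (X * A)ᵀ = X * A

/-- `μ` is an eigenvalue of the real matrix `M`. -/
def IsEigen {n : Type} [Fintype n] (M : Matrix n n ℝ) (μ : ℝ) : Prop :=
  ∃ x : n → ℝ, x ≠ 0 ∧ M *ᵥ x = μ • x

/-- The spectral gap of `M`: the infimum of its nonzero (real) eigenvalues. -/
noncomputable def specGap {n : Type} [Fintype n] (M : Matrix n n ℝ) : ℝ :=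
  sInf {μ : ℝ | μ ≠ 0 ∧ IsEigen M μ}

/-- The number of `d`-dimensional simplices of `K`. -/
def nface (K : SComplex V) (d : ℕ) : ℕ :=
  (K.faces.filter fun s => s.card = d + 1).card

/-- The weighted effective capacitance of `γ` for `L ⊆ K`: the infimum of potential
energies `‖δ[K] p‖²_W` over unit `γ`-potentials `p` of `L`. -/
noncomputable def SComplex.effCapW (K L : SComplex V) (d : ℕ)
    (w : SimpIdx V (d + 1) → ℝ) (γ : SimpIdx V d → ℝ) : ℝ :=
  sInf {E : ℝ | ∃ p : SimpIdx V d → ℝ, L.supportedOn p ∧ (L.bdry d)ᵀ *ᵥ p = 0 ∧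
    p ⬝ᵥ γ = 1 ∧ E = ∑ σ : SimpIdx V (d + 1), ((K.bdry d)ᵀ *ᵥ p) σ ^ 2 * w σ}

/-- Unweighted effective capacitance. -/
noncomputable def SComplex.effCap (K L : SComplex V) (d : ℕ) (γ : SimpIdx V d → ℝ) : ℝ :=
  K.effCapW L d (fun _ => 1) γ

/-- The relative integral boundary matrix `∂[L, L₀]`: entries are kept only for
simplices of `L` not in `L₀`. -/
def relBdryZ (L L₀ : SComplex V) (d : ℕ) :
    Matrix (SimpIdx V d) (SimpIdx V (d + 1)) ℤ :=
  fun τ σ => if (τ : Finset V) ∈ L.faces ∧ (τ : Finset V) ∉ L₀.faces ∧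
      (σ : Finset V) ∈ L.faces ∧ (σ : Finset V) ∉ L₀.faces then
    bsign (τ : Finset V) (σ : Finset V) else 0

/-- Kernel of the relative boundary map out of relative `d`-chains. -/
noncomputable def relKer (L L₀ : SComplex V) : (d : ℕ) → Submodule ℤ (SimpIdx V d → ℤ)
  | 0 => ⊤
  | (d + 1) => LinearMap.ker (Matrix.toLin' (relBdryZ L L₀ d))

/-- The cardinality of the torsion subgroup of the relative homology group
`H_d(L, L₀; ℤ)`. -/
noncomputable def relTorsionCard (L L₀ : SComplex V) (d : ℕ) : ℕ :=
  Nat.card (Submodule.torsion ℤ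
    (↥(relKer L L₀ d) ⧸ Submodule.comap (relKer L L₀ d).subtype
      (LinearMap.range (Matrix.toLin' (relBdryZ L L₀ d)))))
section Aux

private lemma trace_tmul_self_eq_zero {m n : Type} [Fintype m] [Fintype n]
    (N : Matrix m n ℝ) (h : (Nᵀ * N).trace = 0) : N = 0 := by
  have h' : ∑ j, ∑ i, N i j ^ 2 = 0 := by
    simpa [Matrix.trace, Matrix.diag, Matrix.mul_apply, sq] using h
  ext i j
  have hj := (Finset.sum_eq_zero_iff_of_nonneg
    (fun j _ => Finset.sum_nonneg fun i _ => sq_nonneg (N i j))).mp h' j (Finset.mem_univ j)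
  have hi := (Finset.sum_eq_zero_iff_of_nonneg
    (fun i _ => sq_nonneg (N i j))).mp hj i (Finset.mem_univ i)
  simpa using sq_eq_zero_iff.mp hi

private lemma LXA_eq {m n : Type} [Fintype m] [Fintype n]
    (A : Matrix m n ℝ) (L X : Matrix m m ℝ) (hL : L = A * Aᵀ)
    (h1 : L * X * L = L) (h3 : (L * X)ᵀ = L * X) : L * X * A = A := by
  set N := L * X * A - A with hN
  have hNt : Nᵀ = Aᵀ * (L * X) - Aᵀ := by
    rw [hN, Matrix.transpose_sub, Matrix.transpose_mul (L * X) A, h3]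
  have hxx : L * X * (L * X) = L * X := by
    calc L * X * (L * X) = (L * X * L) * X := by
          rw [Matrix.mul_assoc (L*X), ← Matrix.mul_assoc]
    _ = L * X := by rw [h1]
  have e1 : Nᵀ * N = Aᵀ * A - Aᵀ * (L * X) * A := by
    rw [hNt, hN, Matrix.sub_mul, Matrix.mul_sub, Matrix.mul_sub]
    have t1 : Aᵀ * (L * X) * (L * X * A) = Aᵀ * (L * X) * A := by
      rw [show L * X * A = (L * X) * A from rfl, ← Matrix.mul_assoc,
        Matrix.mul_assoc Aᵀ (L * X) (L * X), hxx]
    rw [t1, ← Matrix.mul_assoc Aᵀ (L * X) A]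
    abel
  have htr : (Nᵀ * N).trace = 0 := by
    rw [e1, Matrix.trace_sub]
    have : (Aᵀ * (L * X) * A).trace = (Aᵀ * A).trace := by
      rw [Matrix.mul_assoc, Matrix.trace_mul_comm, Matrix.mul_assoc, ← hL,
        show (L * X) * L = L from h1, hL, Matrix.trace_mul_comm]
    rw [this, sub_self]
  have := trace_tmul_self_eq_zero N htr
  exact sub_eq_zero.mp this

private lemma mulVec_dot {m n : Type} [Fintype m] [Fintype n]
    (M : Matrix m n ℝ) (x : n → ℝ) (y : m → ℝ) :
    (M *ᵥ x) ⬝ᵥ y = x ⬝ᵥ (Mᵀ *ᵥ y) := by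
  simp only [dotProduct, Matrix.mulVec, dotProduct, Matrix.transpose_apply,
    Finset.sum_mul, Finset.mul_sum]
  rw [Finset.sum_comm]
  exact Finset.sum_congr rfl fun j _ => Finset.sum_congr rfl fun i _ => by ring

variable {V : Type} [Fintype V] [LinearOrder V]

private lemma bsign_sub {τ σ : Finset V} (h : bsign τ σ ≠ 0) :
    τ ⊆ σ ∧ τ.card + 1 = σ.card := by
  by_contra hc
  exact h (by simp [bsign, hc])

private lemma ind_mulVec_of_supported (K : SComplex V) {d : ℕ} {f : SimpIdx V d → ℝ}
    (hf : K.supportedOn f) : K.ind d *ᵥ f = f := by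
  funext τ
  rw [SComplex.ind, Matrix.mulVec_diagonal]
  by_cases h : f τ = 0
  · simp [h]
  · simp [hf τ h]

private lemma gbdry_supportedOn (K : SComplex V) {d : ℕ} {f : SimpIdx V (d + 1) → ℝ}
    (hf : K.supportedOn f) : K.supportedOn (gbdry V d *ᵥ f) := by
  intro τ hτ
  simp only [Matrix.mulVec, dotProduct] at hτ
  obtain ⟨σ, -, hσ⟩ := Finset.exists_ne_zero_of_sum_ne_zero hτ
  have hb : bsign (τ : Finset V) (σ : Finset V) ≠ 0 := by
    intro h0
    apply hσ
    simp [gbdry, gbdryZ, h0]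
  have hfσ : f σ ≠ 0 := by
    intro h0
    exact hσ (by simp [h0])
  obtain ⟨hsub, -⟩ := bsign_sub hb
  have hne : (τ : Finset V).Nonempty := by
    rw [← Finset.card_pos, τ.2]; omega
  exact K.down_closed _ (hf σ hfσ) _ hsub hne

private lemma bdry_mulVec_eq (K : SComplex V) {d : ℕ} {f : SimpIdx V (d + 1) → ℝ}
    (hf : K.supportedOn f) : K.bdry d *ᵥ f = gbdry V d *ᵥ f := by
  rw [SComplex.bdry, ← Matrix.mulVec_mulVec, ← Matrix.mulVec_mulVec,
    ind_mulVec_of_supported K hf, ind_mulVec_of_supported K (gbdry_supportedOn K hf)]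

private lemma bdry_col_zero (K : SComplex V) {d : ℕ} (τ : SimpIdx V d)
    {σ : SimpIdx V (d + 1)} (hσ : (σ : Finset V) ∉ K.faces) : K.bdry d τ σ = 0 := by
  rw [SComplex.bdry, SComplex.ind, SComplex.ind, Matrix.mul_diagonal]
  simp [hσ]

end Aux

/-- **Effective resistance equals minimum flow energy.** For a simplicial complex `K`
with positive weights `w` on its `(d+1)`-dimensional simplices and a null-homologous
`d`-dimensional cycle `γ` of `K`, the effective resistance
`R_γ(K) = γᵀ (L^{up,W})⁺ γ` equals the minimum flow energy `∑ f(σ)²/w(σ)`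
over all unit `γ`-flows `f`. -/
theorem effective_resistance_eq_min_flow_energy
    {V : Type} [Fintype V] [LinearOrder V] (K : SComplex V) (d : ℕ)
    (w : SimpIdx V (d + 1) → ℝ)
    (hw : ∀ σ : SimpIdx V (d + 1), (σ : Finset V) ∈ K.faces → 0 < w σ)
    (γ : SimpIdx V d → ℝ) (hsupp : K.supportedOn γ) (hcyc : IsCycle V d γ)
    (hnull : K.NullHomologous d γ)
    (X : Matrix (SimpIdx V d) (SimpIdx V d) ℝ)
    (hX : IsMoorePenrose (K.upLapW d w) X) :
    γ ⬝ᵥ (X *ᵥ γ) = K.effResW d w γ := by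
  classical
  obtain ⟨f₀, hf₀supp, hf₀⟩ := hnull
  set B := K.bdry d with hB
  set L := K.upLapW d w with hLdef
  have hγ : B *ᵥ f₀ = γ := by rw [hB, bdry_mulVec_eq K hf₀supp, hf₀]
  set w' : SimpIdx V (d + 1) → ℝ := fun σ => if (σ : Finset V) ∈ K.faces then w σ else 1
    with hw'def
  have hw' : ∀ σ, 0 < w' σ := by
    intro σ
    by_cases h : (σ : Finset V) ∈ K.faces
    · simpa [hw'def, h] using hw σ h
    · simp [hw'def, h]
  set A : Matrix (SimpIdx V d) (SimpIdx V (d + 1)) ℝ :=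
    Matrix.of (fun τ σ => B τ σ * Real.sqrt (w' σ)) with hAdef
  have hAA : L = A * Aᵀ := by
    ext τ τ'
    rw [hLdef, SComplex.upLapW, ← hB, Matrix.mul_apply, Matrix.mul_apply]
    refine Finset.sum_congr rfl fun σ _ => ?_
    rw [Matrix.mul_diagonal, Matrix.transpose_apply, Matrix.transpose_apply]
    simp only [hAdef, Matrix.of_apply]
    by_cases h : (σ : Finset V) ∈ K.faces
    · have hwσ : Real.sqrt (w' σ) * Real.sqrt (w' σ) = w σ := by
        rw [Real.mul_self_sqrt (hw' σ).le, hw'def]; simp [h]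
      rw [← hwσ]; ring
    · rw [hB]
      simp [bdry_col_zero K τ h]
  have hLXA : L * X * A = A := LXA_eq A L X hAA hX.1 hX.2.2.1
  have hAD : A * Matrix.diagonal (fun σ => (Real.sqrt (w' σ))⁻¹) = B := by
    ext τ σ
    rw [Matrix.mul_diagonal, hAdef]
    simp only [Matrix.of_apply]
    rw [mul_assoc, mul_inv_cancel₀ (Real.sqrt_ne_zero'.mpr (hw' σ)), mul_one]
  have hLXB : L * X * B = B := by
    rw [← hAD, ← Matrix.mul_assoc, hLXA]
  set u := X *ᵥ γ with hu
  have hLu : L *ᵥ u = γ := by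
    rw [hu, Matrix.mulVec_mulVec, ← hγ, Matrix.mulVec_mulVec, hLXB]
  set v := Bᵀ *ᵥ u with hv
  have hv0 : ∀ σ : SimpIdx V (d + 1), (σ : Finset V) ∉ K.faces → v σ = 0 := by
    intro σ hσ
    rw [hv]
    simp only [Matrix.mulVec, dotProduct, Matrix.transpose_apply]
    exact Finset.sum_eq_zero fun τ _ => by rw [hB, bdry_col_zero K τ hσ, zero_mul]
  set fstar : SimpIdx V (d + 1) → ℝ := fun σ => w σ * v σ with hfstar
  have hfsupp : K.supportedOn fstar := by
    intro σ hσ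
    by_contra hc
    exact hσ (by rw [hfstar]; simp [hv0 σ hc])
  have hdWv : Matrix.diagonal w *ᵥ v = fstar := by
    funext σ; rw [Matrix.mulVec_diagonal, hfstar]
  have hBfstar : B *ᵥ fstar = γ := by
    rw [← hdWv, hv, Matrix.mulVec_mulVec, Matrix.mulVec_mulVec, ← hLu, hLdef,
      SComplex.upLapW, ← hB, Matrix.mul_assoc]
  have hgfstar : gbdry V d *ᵥ fstar = γ := by
    rw [← bdry_mulVec_eq K hfsupp, ← hB, hBfstar]
  have hR : γ ⬝ᵥ u = ∑ σ : SimpIdx V (d + 1), w σ * v σ ^ 2 := by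
    have hLuexp : L *ᵥ u = B *ᵥ (Matrix.diagonal w *ᵥ v) := by
      conv_rhs => rw [hv, Matrix.mulVec_mulVec, Matrix.mulVec_mulVec]
      rw [hLdef, SComplex.upLapW, ← hB, Matrix.mul_assoc]
    have hkey : γ ⬝ᵥ u = (Matrix.diagonal w *ᵥ v) ⬝ᵥ v := by
      conv_lhs => rw [← hLu, hLuexp, mulVec_dot]
    rw [hkey]
    refine Finset.sum_congr rfl fun σ _ => ?_
    rw [Matrix.mulVec_diagonal]
    ring
  have henergy : ∑ σ : SimpIdx V (d + 1), fstar σ ^ 2 / w σ = γ ⬝ᵥ u := by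
    rw [hR]
    refine Finset.sum_congr rfl fun σ _ => ?_
    by_cases h : (σ : Finset V) ∈ K.faces
    · have := (hw σ h).ne'
      rw [hfstar]
      field_simp
    · rw [hfstar]
      simp [hv0 σ h]
  have hlb : ∀ f : SimpIdx V (d + 1) → ℝ, K.supportedOn f → gbdry V d *ᵥ f = γ →
      γ ⬝ᵥ u ≤ ∑ σ : SimpIdx V (d + 1), f σ ^ 2 / w σ := by
    intro f hfs hbf
    have hBf : B *ᵥ f = γ := by rw [hB, bdry_mulVec_eq K hfs, hbf]
    have hfv : γ ⬝ᵥ u = ∑ σ : SimpIdx V (d + 1), f σ * v σ := by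
      rw [← hBf, mulVec_dot, ← hv, dotProduct]
    have key : 0 ≤ ∑ σ : SimpIdx V (d + 1),
        (f σ ^ 2 / w σ - 2 * (f σ * v σ) + w σ * v σ ^ 2) := by
      refine Finset.sum_nonneg fun σ _ => ?_
      by_cases h : (σ : Finset V) ∈ K.faces
      · have hwσ := hw σ h
        have h0 : 0 ≤ (f σ - w σ * v σ) ^ 2 / w σ := div_nonneg (sq_nonneg _) hwσ.le
        have heq : (f σ - w σ * v σ) ^ 2 / w σ
            = f σ ^ 2 / w σ - 2 * (f σ * v σ) + w σ * v σ ^ 2 := by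
          field_simp
          ring
        linarith [heq ▸ h0]
      · have hf0 : f σ = 0 := by
          by_contra hc; exact h (hfs σ hc)
        simp [hf0, hv0 σ h]
    have split : ∑ σ : SimpIdx V (d + 1),
        (f σ ^ 2 / w σ - 2 * (f σ * v σ) + w σ * v σ ^ 2)
        = ∑ σ : SimpIdx V (d + 1), f σ ^ 2 / w σ
          - 2 * ∑ σ : SimpIdx V (d + 1), f σ * v σ
          + ∑ σ : SimpIdx V (d + 1), w σ * v σ ^ 2 := by
      rw [Finset.sum_add_distrib, Finset.sum_sub_distrib, Finset.mul_sum]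
    rw [split] at key
    linarith [hR, hfv, key]
  rw [SComplex.effResW]
  have hmem : γ ⬝ᵥ u ∈ {E : ℝ | ∃ f : SimpIdx V (d + 1) → ℝ, K.supportedOn f ∧
      gbdry V d *ᵥ f = γ ∧ E = ∑ σ : SimpIdx V (d + 1), f σ ^ 2 / w σ} :=
    ⟨fstar, hfsupp, hgfstar, henergy.symm⟩
  have hlb' : ∀ E ∈ {E : ℝ | ∃ f : SimpIdx V (d + 1) → ℝ, K.supportedOn f ∧
      gbdry V d *ᵥ f = γ ∧ E = ∑ σ : SimpIdx V (d + 1), f σ ^ 2 / w σ}, γ ⬝ᵥ u ≤ E := by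
    rintro E ⟨f, hfs, hbf, rfl⟩
    exact hlb f hfs hbf
  exact le_antisymm (le_csInf ⟨_, hmem⟩ hlb') (csInf_le ⟨_, hlb'⟩ hmem)
end

section
/- For a simplicial complex K, the spectral gaps satisfy λ_min(L_d^{down}) = λ_min(L_{d-1}^{up}) = min{ 1/R_γ(K) : γ ∈ im ∂_d, ‖γ‖ = 1 }, where R_γ(K) = γ^T (L_{d-1}^{up})^+ γ is the effective resistance. -/
open Matrix

variable {V : Type} [Fintype V] [LinearOrder V]

/-!
The nonzero spectra of `∂ᵀ∂` and `∂∂ᵀ` agree, because `∂` maps an eigenvector of `∂ᵀ∂` with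
nonzero eigenvalue to one of `∂∂ᵀ` (and symmetrically). For `L = ∂∂ᵀ` and `γ = L z` in its range,
the Penrose identity `L X L = L` gives `γᵀ X γ = zᵀ L z`. Expanding `z` in an orthonormal
eigenbasis of `L`, every eigenvalue is `0` or at least `λ_min`, hence
`λ_min · zᵀ L z ≤ ‖L z‖² = ‖γ‖²`, i.e. `1 / R_γ ≥ λ_min` for unit `γ`; a unit eigenvector for an
eigenvalue `μ ≠ 0` has `1 / R_γ = μ`, so the infima agree. Finally `im ∂ = im ∂∂ᵀ`, and `im ∂[K]`
is the set of boundaries of chains supported on `K`, since `K` is closed under taking faces.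
-/

section

variable {n m : Type} [Fintype n] [Fintype m]

theorem IsEigen.of_mul_comm {A : Matrix n m ℝ} {B : Matrix m n ℝ} {μ : ℝ} (hμ : μ ≠ 0)
    (h : IsEigen (B * A) μ) : IsEigen (A * B) μ := by
  obtain ⟨x, hx, hBAx⟩ := h
  refine ⟨A *ᵥ x, fun hAx => hx ?_, ?_⟩
  · have : μ • x = 0 := by rw [← hBAx, ← mulVec_mulVec, hAx, mulVec_zero]
    exact (smul_eq_zero.mp this).resolve_left hμ
  · rw [← mulVec_mulVec, mulVec_mulVec x, hBAx, mulVec_smul]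

theorem specGap_mul_comm (A : Matrix n m ℝ) (B : Matrix m n ℝ) :
    specGap (A * B) = specGap (B * A) := by
  unfold specGap
  congr 1
  ext μ
  exact ⟨fun ⟨hμ, h⟩ => ⟨hμ, h.of_mul_comm hμ⟩,
    fun ⟨hμ, h⟩ => ⟨hμ, h.of_mul_comm hμ⟩⟩

theorem IsEigen.exists_dotProduct_self_eq_one {M : Matrix n n ℝ} {μ : ℝ} (h : IsEigen M μ) :
    ∃ v : n → ℝ, v ⬝ᵥ v = 1 ∧ M *ᵥ v = μ • v := by
  obtain ⟨x, hx, hMx⟩ := h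
  have hpos : 0 < x ⬝ᵥ x := by simpa using dotProduct_star_self_pos_iff.mpr hx
  refine ⟨(√(x ⬝ᵥ x))⁻¹ • x, ?_, by rw [mulVec_smul, hMx, smul_comm]⟩
  rw [smul_dotProduct, dotProduct_smul, smul_smul, smul_eq_mul, ← mul_inv,
    Real.mul_self_sqrt hpos.le, inv_mul_cancel₀ hpos.ne']

theorem OrthonormalBasis.dotProduct_eq_sum {ι : Type*} [Fintype ι]
    (b : OrthonormalBasis ι ℝ (EuclideanSpace ℝ n)) (x y : n → ℝ) :
    x ⬝ᵥ y = ∑ i, (⇑(b i) ⬝ᵥ x) * (⇑(b i) ⬝ᵥ y) := by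
  have := b.sum_inner_mul_inner (WithLp.toLp 2 x) (WithLp.toLp 2 y)
  simp only [EuclideanSpace.inner_eq_star_dotProduct, star_trivial] at this
  simpa [dotProduct_comm] using this.symm

theorem Matrix.IsHermitian.eigenvectorBasis_dotProduct_mulVec [DecidableEq n] {L : Matrix n n ℝ}
    (hL : L.IsHermitian) (i : n) (x : n → ℝ) :
    ⇑(hL.eigenvectorBasis i) ⬝ᵥ (L *ᵥ x) =
      hL.eigenvalues i * (⇑(hL.eigenvectorBasis i) ⬝ᵥ x) := by
  rw [dotProduct_mulVec, ← mulVec_transpose, (isHermitian_iff_isSymm.mp hL).eq,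
    hL.mulVec_eigenvectorBasis, smul_dotProduct, smul_eq_mul]

theorem Matrix.IsHermitian.mul_dotProduct_mulVec_le [DecidableEq n] {L : Matrix n n ℝ}
    (hL : L.IsHermitian) {c : ℝ} (hc : 0 ≤ c)
    (hcL : ∀ i, hL.eigenvalues i ≠ 0 → c ≤ hL.eigenvalues i) (z : n → ℝ) :
    c * (z ⬝ᵥ (L *ᵥ z)) ≤ (L *ᵥ z) ⬝ᵥ (L *ᵥ z) := by
  set b := hL.eigenvectorBasis
  rw [b.dotProduct_eq_sum z, b.dotProduct_eq_sum (L *ᵥ z), Finset.mul_sum]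
  refine Finset.sum_le_sum fun i _ => ?_
  simp only [b, hL.eigenvectorBasis_dotProduct_mulVec]
  rcases eq_or_ne (hL.eigenvalues i) 0 with h | h
  · simp [h]
  · have hci := hcL i h
    nlinarith [mul_nonneg (mul_nonneg (hc.trans hci) (sub_nonneg.mpr hci))
      (sq_nonneg (⇑(b i) ⬝ᵥ z))]

theorem Matrix.PosSemidef.exists_isEigen_mul_le {L : Matrix n n ℝ} (hL : L.PosSemidef)
    {z : n → ℝ} (hz : L *ᵥ z ≠ 0) :
    ∃ μ, 0 < μ ∧ IsEigen L μ ∧ μ * (z ⬝ᵥ (L *ᵥ z)) ≤ (L *ᵥ z) ⬝ᵥ (L *ᵥ z) := by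
  classical
  set ev := hL.1.eigenvalues
  have hne : (Finset.univ.filter fun i => ev i ≠ 0).Nonempty := by
    by_contra h
    simp only [Finset.not_nonempty_iff_eq_empty, Finset.filter_eq_empty_iff, Finset.mem_univ,
      not_not, true_implies] at h
    have hL0 : L = 0 := hL.1.eigenvalues_eq_zero_iff.mp (funext h)
    exact hz (by rw [hL0, zero_mulVec])
  obtain ⟨i, hi, hmin⟩ := (Finset.univ.filter fun i => ev i ≠ 0).exists_min_image ev hne
  have hi0 : ev i ≠ 0 := (Finset.mem_filter.mp hi).2
  refine ⟨ev i, lt_of_le_of_ne (hL.eigenvalues_nonneg i) hi0.symm,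
    ⟨_, (WithLp.ofLp_eq_zero 2).ne.mpr (hL.1.eigenvectorBasis.orthonormal.ne_zero i),
      hL.1.mulVec_eigenvectorBasis i⟩, ?_⟩
  exact hL.1.mul_dotProduct_mulVec_le (hL.eigenvalues_nonneg i)
    (fun j hj => hmin j (Finset.mem_filter.mpr ⟨Finset.mem_univ j, hj⟩)) z

theorem IsMoorePenrose.mulVec_dotProduct_mulVec_mulVec {L X : Matrix n n ℝ}
    (hLX : IsMoorePenrose L X) (hL : L.IsSymm) (z : n → ℝ) :
    (L *ᵥ z) ⬝ᵥ (X *ᵥ (L *ᵥ z)) = z ⬝ᵥ (L *ᵥ z) := by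
  rw [dotProduct_comm, dotProduct_mulVec, ← mulVec_transpose, hL.eq, mulVec_mulVec, mulVec_mulVec,
    hLX.1, dotProduct_comm]

theorem Matrix.PosSemidef.specGap_eq_sInf_inv_dotProduct_mulVec {L X : Matrix n n ℝ}
    (hL : L.PosSemidef) (hLX : IsMoorePenrose L X) :
    specGap L = sInf {r : ℝ | ∃ γ ∈ LinearMap.range L.mulVecLin, γ ⬝ᵥ γ = 1 ∧
      r = (γ ⬝ᵥ (X *ᵥ γ))⁻¹} := by
  have hLt : L.IsSymm := isHermitian_iff_isSymm.mp hL.1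
  apply csInf_eq_csInf_of_forall_exists_le
  · rintro μ ⟨hμ, hLμ⟩
    obtain ⟨v, hv, hLv⟩ := hLμ.exists_dotProduct_self_eq_one
    have hvL : L *ᵥ (μ⁻¹ • v) = v := by
      rw [mulVec_smul, hLv, smul_smul, inv_mul_cancel₀ hμ, one_smul]
    have hvXv : v ⬝ᵥ (X *ᵥ v) = μ⁻¹ := by
      conv_lhs => rw [← hvL, hLX.mulVec_dotProduct_mulVec_mulVec hLt, hvL]
      rw [smul_dotProduct, hv, smul_eq_mul, mul_one]
    exact ⟨μ, ⟨v, ⟨μ⁻¹ • v, hvL⟩, hv, by rw [hvXv, inv_inv]⟩, le_rfl⟩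
  · rintro r ⟨_, ⟨z, rfl⟩, hz, rfl⟩
    simp only [mulVecLin_apply] at hz ⊢
    have hLz : L *ᵥ z ≠ 0 := by rintro h; simp [h] at hz
    obtain ⟨μ, hμ, hLμ, hle⟩ := hL.exists_isEigen_mul_le hLz
    have hpos : 0 < z ⬝ᵥ (L *ᵥ z) := by
      refine lt_of_le_of_ne (by simpa using hL.dotProduct_mulVec_nonneg z) fun h => hLz ?_
      exact (hL.dotProduct_mulVec_zero_iff z).mp (by simpa using h.symm)
    refine ⟨μ, ⟨hμ.ne', hLμ⟩, ?_⟩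
    rw [hLX.mulVec_dotProduct_mulVec_mulVec hLt, ← one_div, le_div_iff₀ hpos]
    exact hz ▸ hle
theorem Matrix.range_mulVecLin_mul_transpose_self {R : Type*} [Field R] [LinearOrder R]
    [IsStrictOrderedRing R] (A : Matrix n m R) :
    LinearMap.range (A * Aᵀ).mulVecLin = LinearMap.range A.mulVecLin := by
  refine Submodule.eq_of_le_of_finrank_eq ?_ ?_
  · rw [mulVecLin_mul]; exact LinearMap.range_comp_le_range _ _
  · exact rank_self_mul_transpose A

end

namespace SComplex

variable (K : SComplex V)

theorem ind_mulVec_of_supportedOn {e : ℕ} {f : SimpIdx V e → ℝ} (hf : K.supportedOn f) :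
    K.ind e *ᵥ f = f := by
  funext σ
  rw [SComplex.ind, mulVec_diagonal]
  by_cases hσ : (σ : Finset V) ∈ K.faces
  · rw [if_pos hσ, one_mul]
  · rw [if_neg hσ, zero_mul, not_not.mp (mt (hf σ) hσ)]

theorem supportedOn_ind_mulVec {e : ℕ} (f : SimpIdx V e → ℝ) :
    K.supportedOn (K.ind e *ᵥ f) := by
  intro σ h
  by_contra hσ
  exact h (by rw [SComplex.ind, mulVec_diagonal, if_neg hσ, zero_mul])

theorem supportedOn_gbdry_mulVec {d : ℕ} {f : SimpIdx V (d + 1) → ℝ} (hf : K.supportedOn f) :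
    K.supportedOn (gbdry V d *ᵥ f) := by
  intro τ hτ
  obtain ⟨σ, -, hσ⟩ := Finset.exists_ne_zero_of_sum_ne_zero hτ
  have hsub : (τ : Finset V) ⊆ σ := by
    by_contra h
    exact hσ (by simp [gbdry, gbdryZ, bsign, h])
  exact K.down_closed _ (hf σ (right_ne_zero_of_mul hσ)) _ hsub
    (Finset.card_pos.mp (by rw [τ.2]; omega))

theorem nullHomologous_iff_mem_range_bdry {d : ℕ} {γ : SimpIdx V d → ℝ} :
    K.NullHomologous d γ ↔ γ ∈ LinearMap.range (K.bdry d).mulVecLin := by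
  simp only [LinearMap.mem_range, mulVecLin_apply, SComplex.bdry, ← mulVec_mulVec]
  constructor
  · rintro ⟨f, hf, rfl⟩
    exact ⟨f, by rw [K.ind_mulVec_of_supportedOn hf,
      K.ind_mulVec_of_supportedOn (K.supportedOn_gbdry_mulVec hf)]⟩
  · rintro ⟨f, rfl⟩
    have hf := K.supportedOn_ind_mulVec (e := d + 1) f
    exact ⟨_, hf, (K.ind_mulVec_of_supportedOn (K.supportedOn_gbdry_mulVec hf)).symm⟩

end SComplex

/-- **Spectral gap and effective resistance.** For a simplicial complex `K`, the
spectral gaps of the down-Laplacian on `(d+1)`-chains and of the up-Laplacian on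
`d`-chains coincide and equal the minimum of the inverse effective resistances
`1/R_γ(K) = (γᵀ (L^{up})⁺ γ)⁻¹` over all unit-norm cycles `γ ∈ im ∂[K]`. -/
theorem spectral_gap_eq_min_inverse_effective_resistance
    {V : Type} [Fintype V] [LinearOrder V] (K : SComplex V) (d : ℕ)
    (X : Matrix (SimpIdx V d) (SimpIdx V d) ℝ)
    (hX : IsMoorePenrose (K.upLap d) X) :
    specGap (K.downLap (d + 1)) = specGap (K.upLap d) ∧
    specGap (K.upLap d) =
      sInf {r : ℝ | ∃ γ : SimpIdx V d → ℝ,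
        (∃ f : SimpIdx V (d + 1) → ℝ, K.supportedOn f ∧ gbdry V d *ᵥ f = γ) ∧
        γ ⬝ᵥ γ = 1 ∧ r = (γ ⬝ᵥ (X *ᵥ γ))⁻¹} := by
  refine ⟨specGap_mul_comm _ _, ?_⟩
  have hL : (K.upLap d).PosSemidef := by
    simpa only [SComplex.upLap, conjTranspose_eq_transpose_of_trivial] using
      posSemidef_self_mul_conjTranspose (K.bdry d)
  rw [hL.specGap_eq_sInf_inv_dotProduct_mulVec hX, SComplex.upLap,
    range_mulVecLin_mul_transpose_self]
  simp_rw [← K.nullHomologous_iff_mem_range_bdry]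
  rfl
end

section
/- Series formula for effective resistance: let K₁ and K₂ be simplicial complexes with disjoint sets of d-simplices and let γ be a (d-1)-cycle null-homologous in K = K₁ ∪ K₂ that decomposes as γ = γ₁ + γ₂ with γᵢ null-homologous in Kᵢ. Then R_γ(K) ≤ R_{γ₁}(K₁) + R_{γ₂}(K₂), with equality when γ₁ and γ₂ are the boundaries of the unique chains in C_d(K₁) and C_d(K₂) summing to γ. -/
open Matrix

variable {V : Type} [Fintype V] [LinearOrder V]

/-- The union of two simplicial complexes. -/
def SComplex.union {V : Type} [DecidableEq V] (K₁ K₂ : SComplex V) : SComplex V :=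
  ⟨K₁.faces ∪ K₂.faces, by
    intro s hs t hts htne
    rcases Finset.mem_union.mp hs with h | h
    · exact Finset.mem_union_left _ (K₁.down_closed s h t hts htne)
    · exact Finset.mem_union_right _ (K₂.down_closed s h t hts htne)⟩

/-- `(σ, τ)` is a free (collapse) pair of `K`: `τ` is a codimension-one face of `σ`
contained in no other face of `K` besides `τ` and `σ`. -/
def IsCollapsePair {V : Type} (K : SComplex V) (σ τ : Finset V) : Prop :=
  σ ∈ K.faces ∧ τ ∈ K.faces ∧ τ ⊆ σ ∧ τ.card + 1 = σ.card ∧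
    ∀ ρ ∈ K.faces, τ ⊆ ρ → ρ = τ ∨ ρ = σ

/-- `K'` is obtained from `K` by one elementary collapse. -/
def ElemCollapse {V : Type} [DecidableEq V] (K K' : SComplex V) : Prop :=
  ∃ σ τ : Finset V, IsCollapsePair K σ τ ∧ K'.faces = K.faces \ {σ, τ}

/-- `K` collapses to `L` via a (possibly empty) sequence of elementary collapses. -/
def CollapsesTo {V : Type} [DecidableEq V] (K L : SComplex V) : Prop :=
  Relation.ReflTransGen ElemCollapse K L

/-- Inserting a single simplex, all of whose proper faces are already present,
into a simplicial complex. -/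
def insertSimplex {V : Type} [DecidableEq V] (L : SComplex V) (s : Finset V)
    (h : ∀ t ⊆ s, t.Nonempty → t ≠ s → t ∈ L.faces) : SComplex V :=
  ⟨insert s L.faces, by
    intro a ha t hts htne
    rcases Finset.mem_insert.mp ha with rfl | ha
    · by_cases hts' : t = a
      · exact hts' ▸ Finset.mem_insert_self _ _
      · exact Finset.mem_insert_of_mem (h t hts htne hts')
    · exact Finset.mem_insert_of_mem (L.down_closed a ha t hts htne)⟩

/-- The weighted degree of a `d`-simplex `σ` in `K`: the total weight of the
`(d+1)`-simplices of `K` containing it. -/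
noncomputable def degW {V : Type} [Fintype V] [LinearOrder V] (K : SComplex V) (d : ℕ)
    (w : SimpIdx V (d + 1) → ℝ) (σ : SimpIdx V d) : ℝ :=
  ∑ τ : SimpIdx V (d + 1),
    if (σ : Finset V) ⊆ (τ : Finset V) ∧ (τ : Finset V) ∈ K.faces then w τ else 0
/-- **Series formula for effective resistance.** Let `K₁` and `K₂` be simplicial
complexes with disjoint sets of `(d+1)`-dimensional simplices, and let `γ` be a
`d`-cycle null-homologous in `K = K₁ ∪ K₂` that decomposes as `γ = γ₁ + γ₂` with
`γᵢ` null-homologous in `Kᵢ`. Then `R_γ(K) ≤ R_{γ₁}(K₁) + R_{γ₂}(K₂)`, with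
equality when `(γ₁, γ₂)` is the unique such decomposition of `γ`. -/
theorem effective_resistance_series_formula
    {V : Type} [Fintype V] [LinearOrder V] (K₁ K₂ : SComplex V) (d : ℕ)
    (hdisj : ∀ s : Finset V, s.card = d + 2 → ¬(s ∈ K₁.faces ∧ s ∈ K₂.faces))
    (w : SimpIdx V (d + 1) → ℝ)
    (hw : ∀ σ : SimpIdx V (d + 1), (σ : Finset V) ∈ (K₁.union K₂).faces → 0 < w σ)
    (γ γ₁ γ₂ : SimpIdx V d → ℝ)
    (hγsupp₁ : K₁.supportedOn γ₁) (hγsupp₂ : K₂.supportedOn γ₂)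
    (hcyc : IsCycle V d γ) (hsum : γ = γ₁ + γ₂)
    (hK : (K₁.union K₂).NullHomologous d γ)
    (h₁ : K₁.NullHomologous d γ₁) (h₂ : K₂.NullHomologous d γ₂) :
    (K₁.union K₂).effResW d w γ ≤ K₁.effResW d w γ₁ + K₂.effResW d w γ₂ ∧
    ((∀ γ₁' γ₂' : SimpIdx V d → ℝ, K₁.NullHomologous d γ₁' → K₂.NullHomologous d γ₂' →
        γ₁' + γ₂' = γ → γ₁' = γ₁ ∧ γ₂' = γ₂) →
      (K₁.union K₂).effResW d w γ = K₁.effResW d w γ₁ + K₂.effResW d w γ₂) := by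
  classical
  obtain ⟨g, hgs, hgb⟩ := hK
  obtain ⟨f₁, hf₁s, hf₁b⟩ := h₁
  obtain ⟨f₂, hf₂s, hf₂b⟩ := h₂
  set U := K₁.union K₂ with hUdef
  set En : (SimpIdx V (d+1) → ℝ) → ℝ := fun f => ∑ σ : SimpIdx V (d+1), f σ ^ 2 / w σ
    with hEn
  set S : SComplex V → (SimpIdx V d → ℝ) → Set ℝ := fun K γ' =>
    {e : ℝ | ∃ f, K.supportedOn f ∧ gbdry V d *ᵥ f = γ' ∧ e = En f} with hS
  have heff : ∀ (K : SComplex V) (γ' : SimpIdx V d → ℝ),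
      K.effResW d w γ' = sInf (S K γ') := fun K γ' => rfl
  have hU1 : K₁.faces ⊆ U.faces := fun s hs => Finset.mem_union_left _ hs
  have hU2 : K₂.faces ⊆ U.faces := fun s hs => Finset.mem_union_right _ hs
  -- nonnegativity of energy terms
  have hterm : ∀ (L : SComplex V) (f : SimpIdx V (d+1) → ℝ), L.faces ⊆ U.faces →
      L.supportedOn f → ∀ σ : SimpIdx V (d+1), 0 ≤ f σ ^ 2 / w σ := by
    intro L f hLU hf σ
    by_cases h0 : f σ = 0
    · simp [h0]
    · exact div_nonneg (sq_nonneg _) (le_of_lt (hw σ (hLU (hf σ h0))))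
  have hEnn : ∀ (L : SComplex V) (f : SimpIdx V (d+1) → ℝ), L.faces ⊆ U.faces →
      L.supportedOn f → 0 ≤ En f := fun L f hLU hf =>
    Finset.sum_nonneg fun σ _ => hterm L f hLU hf σ
  have hbdd : ∀ (L : SComplex V) (γ' : SimpIdx V d → ℝ), L.faces ⊆ U.faces →
      BddBelow (S L γ') := by
    rintro L γ' hLU
    exact ⟨0, by rintro e ⟨f, hf, -, rfl⟩; exact hEnn L f hLU hf⟩
  -- energy additivity for disjointly supported flows
  have hEadd : ∀ f₁' f₂' : SimpIdx V (d+1) → ℝ, (∀ σ, f₁' σ = 0 ∨ f₂' σ = 0) →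
      En (f₁' + f₂') = En f₁' + En f₂' := by
    intro f₁' f₂' h
    simp only [hEn]
    rw [← Finset.sum_add_distrib]
    refine Finset.sum_congr rfl fun σ _ => ?_
    rcases h σ with h0 | h0 <;> simp [h0, add_div]
  have hdis : ∀ f₁' f₂' : SimpIdx V (d+1) → ℝ, K₁.supportedOn f₁' → K₂.supportedOn f₂' →
      ∀ σ, f₁' σ = 0 ∨ f₂' σ = 0 := by
    intro f₁' f₂' h1 h2 σ
    by_contra h
    push_neg at h
    exact hdisj σ σ.2 ⟨h1 σ h.1, h2 σ h.2⟩
  have hne1 : (S K₁ γ₁).Nonempty := ⟨En f₁, f₁, hf₁s, hf₁b, rfl⟩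
  have hne2 : (S K₂ γ₂).Nonempty := ⟨En f₂, f₂, hf₂s, hf₂b, rfl⟩
  have hneU : (S U γ).Nonempty := ⟨En g, g, hgs, hgb, rfl⟩
  -- sum of flows gives flow in the union
  have hstep : ∀ e₁ ∈ S K₁ γ₁, ∀ e₂ ∈ S K₂ γ₂, sInf (S U γ) ≤ e₁ + e₂ := by
    rintro e₁ ⟨a, has, hab, rfl⟩ e₂ ⟨b, hbs, hbb, rfl⟩
    refine csInf_le (hbdd U γ subset_rfl) ⟨a + b, ?_, ?_, ?_⟩
    · intro σ hσ
      by_cases h0 : a σ = 0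
      · exact hU2 (hbs σ (by simpa [h0] using hσ))
      · exact hU1 (has σ h0)
    · rw [Matrix.mulVec_add, hab, hbb, hsum]
    · exact (hEadd a b (hdis a b has hbs)).symm
  have hineq : sInf (S U γ) ≤ sInf (S K₁ γ₁) + sInf (S K₂ γ₂) := by
    have h1 : ∀ e₁ ∈ S K₁ γ₁, sInf (S U γ) - e₁ ≤ sInf (S K₂ γ₂) := by
      intro e₁ he₁
      refine le_csInf hne2 fun e₂ he₂ => ?_
      have := hstep e₁ he₁ e₂ he₂; linarith
    have h2 : sInf (S U γ) - sInf (S K₂ γ₂) ≤ sInf (S K₁ γ₁) := by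
      refine le_csInf hne1 fun e₁ he₁ => ?_
      have := h1 e₁ he₁; linarith
    linarith
  refine ⟨by rw [heff, heff, heff]; exact hineq, fun huniq => ?_⟩
  rw [heff, heff, heff]
  refine le_antisymm hineq (le_csInf hneU ?_)
  rintro e ⟨f, hfs, hfb, rfl⟩
  set a : SimpIdx V (d+1) → ℝ := fun σ => if (σ : Finset V) ∈ K₁.faces then f σ else 0
    with ha
  set b : SimpIdx V (d+1) → ℝ := fun σ => if (σ : Finset V) ∈ K₁.faces then 0 else f σ
    with hb
  have hfab : f = a + b := by
    funext σ
    by_cases h0 : (σ : Finset V) ∈ K₁.faces <;> simp [ha, hb, h0]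
  have has : K₁.supportedOn a := by
    intro σ hσ
    by_cases h0 : (σ : Finset V) ∈ K₁.faces
    · exact h0
    · simp [ha, h0] at hσ
  have hbs : K₂.supportedOn b := by
    intro σ hσ
    by_cases h0 : (σ : Finset V) ∈ K₁.faces
    · simp [hb, h0] at hσ
    · have hfσ : f σ ≠ 0 := by simpa [hb, h0] using hσ
      rcases Finset.mem_union.mp (hfs σ hfσ) with h | h
      · exact absurd h h0
      · exact h
  have hsumab : gbdry V d *ᵥ a + gbdry V d *ᵥ b = γ := by
    rw [← Matrix.mulVec_add, ← hfab, hfb]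
  obtain ⟨hγ1, hγ2⟩ := huniq (gbdry V d *ᵥ a) (gbdry V d *ᵥ b)
    ⟨a, has, rfl⟩ ⟨b, hbs, rfl⟩ hsumab
  have h1 : sInf (S K₁ γ₁) ≤ En a := csInf_le (hbdd K₁ γ₁ hU1) ⟨a, has, hγ1, rfl⟩
  have h2 : sInf (S K₂ γ₂) ≤ En b := csInf_le (hbdd K₂ γ₂ hU2) ⟨b, hbs, hγ2, rfl⟩
  have hdab : ∀ σ, a σ = 0 ∨ b σ = 0 := by
    intro σ
    by_cases h0 : (σ : Finset V) ∈ K₁.faces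
    · right; simp [hb, h0]
    · left; simp [ha, h0]
  have : En f = En a + En b := by rw [hfab, hEadd a b hdab]
  linarith
end

section
/- Parallel formula for effective resistance: let K₁ and K₂ be simplicial complexes with disjoint sets of d-simplices and γ a (d-1)-cycle null-homologous in both K₁ and K₂. Then for K = K₁ ∪ K₂, R_γ(K) ≤ ( 1/R_γ(K₁) + 1/R_γ(K₂) )^{-1}, with equality when im ∂_d[K₁] ∩ im ∂_d[K₂] = span{γ}. -/
open Matrix

variable {V : Type} [Fintype V] [LinearOrder V]

section ParallelAux

variable {V : Type} [Fintype V] [LinearOrder V]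

/-- The set of flow energies of unit `γ`-flows in `K`. -/
private def ESet (K : SComplex V) (d : ℕ) (w : SimpIdx V (d + 1) → ℝ)
    (γ : SimpIdx V d → ℝ) : Set ℝ :=
  {E : ℝ | ∃ f : SimpIdx V (d + 1) → ℝ, K.supportedOn f ∧ gbdry V d *ᵥ f = γ ∧
    E = ∑ σ : SimpIdx V (d + 1), f σ ^ 2 / w σ}

private lemma effResW_eq_sInf_ESet (K : SComplex V) (d : ℕ) (w : SimpIdx V (d + 1) → ℝ)
    (γ : SimpIdx V d → ℝ) : K.effResW d w γ = sInf (ESet K d w γ) := rfl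

private lemma energy_nonneg (K : SComplex V) (d : ℕ) (w : SimpIdx V (d + 1) → ℝ)
    (hw : ∀ σ : SimpIdx V (d + 1), (σ : Finset V) ∈ K.faces → 0 < w σ)
    (f : SimpIdx V (d + 1) → ℝ) (hf : K.supportedOn f) :
    0 ≤ ∑ σ : SimpIdx V (d + 1), f σ ^ 2 / w σ := by
  refine Finset.sum_nonneg fun σ _ => ?_
  by_cases h : f σ = 0
  · simp [h]
  · exact div_nonneg (sq_nonneg _) (hw σ (hf σ h)).le

private lemma ESet_bddBelow (K : SComplex V) (d : ℕ) (w : SimpIdx V (d + 1) → ℝ)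
    (hw : ∀ σ : SimpIdx V (d + 1), (σ : Finset V) ∈ K.faces → 0 < w σ)
    (γ : SimpIdx V d → ℝ) : BddBelow (ESet K d w γ) := by
  refine ⟨0, fun E hE => ?_⟩
  obtain ⟨f, hf, -, hEf⟩ := hE
  exact hEf ▸ energy_nonneg K d w hw f hf

private lemma energy_pos_lb (K : SComplex V) (d : ℕ) (w : SimpIdx V (d + 1) → ℝ)
    (hw : ∀ σ : SimpIdx V (d + 1), (σ : Finset V) ∈ K.faces → 0 < w σ)
    (γ : SimpIdx V d → ℝ) (hγ : γ ≠ 0) :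
    ∃ c : ℝ, 0 < c ∧ ∀ f : SimpIdx V (d + 1) → ℝ, K.supportedOn f →
      gbdry V d *ᵥ f = γ → c ≤ ∑ σ : SimpIdx V (d + 1), f σ ^ 2 / w σ := by
  obtain ⟨τ, hτ⟩ := Function.ne_iff.mp hγ
  set M : ℝ := 1 + ∑ σ : SimpIdx V (d + 1), |w σ| with hMdef
  have hM : 0 < M := by positivity
  set N : ℕ := Fintype.card (SimpIdx V (d + 1)) with hNdef
  have hγτ2 : 0 < γ τ ^ 2 := lt_of_le_of_ne (sq_nonneg _) (Ne.symm (pow_ne_zero 2 hτ))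
  refine ⟨γ τ ^ 2 / (((N : ℝ) + 1) * M), by positivity, fun f hf hbf => ?_⟩
  have hwM : ∀ σ : SimpIdx V (d + 1), w σ ≤ M := by
    intro σ
    have h1 : |w σ| ≤ ∑ σ' : SimpIdx V (d + 1), |w σ'| :=
      Finset.single_le_sum (f := fun σ' : SimpIdx V (d + 1) => |w σ'|)
        (fun i _ => abs_nonneg _) (Finset.mem_univ σ)
    have h2 := le_abs_self (w σ)
    rw [hMdef]; linarith
  have habs : |γ τ| ≤ ∑ σ : SimpIdx V (d + 1), |f σ| := by
    have hγτ : γ τ = ∑ σ : SimpIdx V (d + 1), gbdry V d τ σ * f σ := by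
      rw [← hbf]; simp [Matrix.mulVec, dotProduct]
    rw [hγτ]
    refine (Finset.abs_sum_le_sum_abs _ _).trans (Finset.sum_le_sum fun σ _ => ?_)
    rw [abs_mul]
    have hb : |gbdry V d τ σ| ≤ 1 := by
      simp only [gbdry, gbdryZ, Matrix.map_apply, bsign]
      split
      · push_cast
        rw [abs_pow, abs_neg, abs_one, one_pow]
      · simp
    exact mul_le_of_le_one_left (abs_nonneg _) hb
  have hcs : (∑ σ : SimpIdx V (d + 1), |f σ|) ^ 2
      ≤ (N : ℝ) * ∑ σ : SimpIdx V (d + 1), f σ ^ 2 := by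
    have := sq_sum_le_card_mul_sum_sq (s := (Finset.univ : Finset (SimpIdx V (d + 1))))
      (f := fun σ => |f σ|)
    simp only [sq_abs] at this
    exact this
  have hsum_nonneg : 0 ≤ ∑ σ : SimpIdx V (d + 1), f σ ^ 2 :=
    Finset.sum_nonneg fun σ _ => sq_nonneg _
  have hkey : γ τ ^ 2 ≤ ((N : ℝ) + 1) * ∑ σ : SimpIdx V (d + 1), f σ ^ 2 := by
    have h3 : γ τ ^ 2 ≤ (∑ σ : SimpIdx V (d + 1), |f σ|) ^ 2 := by
      rw [← sq_abs (γ τ)]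
      exact pow_le_pow_left₀ (abs_nonneg _) habs 2
    nlinarith
  have hEM : (∑ σ : SimpIdx V (d + 1), f σ ^ 2) / M
      ≤ ∑ σ : SimpIdx V (d + 1), f σ ^ 2 / w σ := by
    rw [Finset.sum_div]
    refine Finset.sum_le_sum fun σ _ => ?_
    by_cases h : f σ = 0
    · simp [h]
    · have hwσ := hw σ (hf σ h)
      exact div_le_div_of_nonneg_left (sq_nonneg _) hwσ (hwM σ)
  refine le_trans ?_ hEM
  rw [div_le_div_iff₀ (by positivity) hM]
  nlinarith

private lemma effResW_pos (K : SComplex V) (d : ℕ) (w : SimpIdx V (d + 1) → ℝ)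
    (hw : ∀ σ : SimpIdx V (d + 1), (σ : Finset V) ∈ K.faces → 0 < w σ)
    (γ : SimpIdx V d → ℝ) (hγ : γ ≠ 0) (hnh : K.NullHomologous d γ) :
    0 < K.effResW d w γ := by
  obtain ⟨c, hc, hlb⟩ := energy_pos_lb K d w hw γ hγ
  obtain ⟨f₀, hf₀, hbf₀⟩ := hnh
  rw [effResW_eq_sInf_ESet]
  refine lt_of_lt_of_le hc (le_csInf ⟨_, f₀, hf₀, hbf₀, rfl⟩ ?_)
  rintro E ⟨f, hf, hbf, rfl⟩
  exact hlb f hf hbf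

end ParallelAux

set_option maxHeartbeats 2000000 in
/-- **Parallel formula for effective resistance.** Let `K₁` and `K₂` be simplicial
complexes with disjoint sets of `(d+1)`-dimensional simplices and `γ` a `d`-cycle
null-homologous in both. Then for `K = K₁ ∪ K₂`,
`R_γ(K) ≤ (1/R_γ(K₁) + 1/R_γ(K₂))⁻¹`, with equality when
`im ∂[K₁] ∩ im ∂[K₂] = span{γ}`. -/
theorem effective_resistance_parallel_formula
    {V : Type} [Fintype V] [LinearOrder V] (K₁ K₂ : SComplex V) (d : ℕ)
    (hdisj : ∀ s : Finset V, s.card = d + 2 → ¬(s ∈ K₁.faces ∧ s ∈ K₂.faces))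
    (w : SimpIdx V (d + 1) → ℝ)
    (hw : ∀ σ : SimpIdx V (d + 1), (σ : Finset V) ∈ (K₁.union K₂).faces → 0 < w σ)
    (γ : SimpIdx V d → ℝ)
    (hsupp₁ : K₁.supportedOn γ) (hsupp₂ : K₂.supportedOn γ) (hcyc : IsCycle V d γ)
    (h₁ : K₁.NullHomologous d γ) (h₂ : K₂.NullHomologous d γ) :
    (K₁.union K₂).effResW d w γ ≤ ((K₁.effResW d w γ)⁻¹ + (K₂.effResW d w γ)⁻¹)⁻¹ ∧
    (({x : SimpIdx V d → ℝ | ∃ f, K₁.supportedOn f ∧ gbdry V d *ᵥ f = x} ∩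
        {x : SimpIdx V d → ℝ | ∃ f, K₂.supportedOn f ∧ gbdry V d *ᵥ f = x} =
        (Submodule.span ℝ {γ} : Submodule ℝ (SimpIdx V d → ℝ))) →
      (K₁.union K₂).effResW d w γ = ((K₁.effResW d w γ)⁻¹ + (K₂.effResW d w γ)⁻¹)⁻¹) := by
  classical
  have hw₁ : ∀ σ : SimpIdx V (d + 1), (σ : Finset V) ∈ K₁.faces → 0 < w σ :=
    fun σ h => hw σ (Finset.mem_union_left _ h)
  have hw₂ : ∀ σ : SimpIdx V (d + 1), (σ : Finset V) ∈ K₂.faces → 0 < w σ :=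
    fun σ h => hw σ (Finset.mem_union_right _ h)
  have hsub₁ : ∀ f : SimpIdx V (d + 1) → ℝ, K₁.supportedOn f → (K₁.union K₂).supportedOn f :=
    fun f hf σ hσ => Finset.mem_union_left _ (hf σ hσ)
  have hsub₂ : ∀ f : SimpIdx V (d + 1) → ℝ, K₂.supportedOn f → (K₁.union K₂).supportedOn f :=
    fun f hf σ hσ => Finset.mem_union_right _ (hf σ hσ)
  have horth : ∀ (f₁ f₂ : SimpIdx V (d + 1) → ℝ), K₁.supportedOn f₁ → K₂.supportedOn f₂ →
      ∀ σ : SimpIdx V (d + 1), f₁ σ * f₂ σ = 0 := by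
    intro f₁ f₂ hf₁ hf₂ σ
    by_cases h1 : f₁ σ = 0
    · simp [h1]
    by_cases h2 : f₂ σ = 0
    · simp [h2]
    exact absurd ⟨hf₁ σ h1, hf₂ σ h2⟩ (hdisj σ (by have := σ.2; omega))
  have esplit : ∀ (f₁ f₂ : SimpIdx V (d + 1) → ℝ), (∀ σ, f₁ σ * f₂ σ = 0) →
      ∑ σ : SimpIdx V (d + 1), (f₁ σ + f₂ σ) ^ 2 / w σ
        = ∑ σ : SimpIdx V (d + 1), f₁ σ ^ 2 / w σ
          + ∑ σ : SimpIdx V (d + 1), f₂ σ ^ 2 / w σ := by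
    intro f₁ f₂ h
    rw [← Finset.sum_add_distrib]
    refine Finset.sum_congr rfl fun σ _ => ?_
    have h2 : (f₁ σ + f₂ σ) ^ 2 = f₁ σ ^ 2 + f₂ σ ^ 2 := by linear_combination 2 * h σ
    rw [h2, add_div]
  have escale : ∀ (t : ℝ) (f : SimpIdx V (d + 1) → ℝ),
      ∑ σ : SimpIdx V (d + 1), (t • f) σ ^ 2 / w σ
        = t ^ 2 * ∑ σ : SimpIdx V (d + 1), f σ ^ 2 / w σ := by
    intro t f
    rw [Finset.mul_sum]
    refine Finset.sum_congr rfl fun σ _ => ?_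
    rw [Pi.smul_apply, smul_eq_mul, mul_pow, mul_div_assoc]
  have hcancel : ∀ (x s : ℝ), x ≠ 0 → x ^ 2 * (x⁻¹ ^ 2 * s) = s := by
    intro x s hx; field_simp
  by_cases hγ : γ = 0
  · -- degenerate case: everything is zero
    have hzero : ∀ (K : SComplex V),
        (∀ σ : SimpIdx V (d + 1), (σ : Finset V) ∈ K.faces → 0 < w σ) →
        K.effResW d w γ = 0 := by
      intro K hwK
      have hmem : (0 : ℝ) ∈ ESet K d w γ := by
        refine ⟨0, fun σ h => absurd rfl h, ?_, by simp⟩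
        rw [hγ, Matrix.mulVec_zero]
      rw [effResW_eq_sInf_ESet]
      refine le_antisymm (csInf_le (ESet_bddBelow K d w hwK γ) hmem) (le_csInf ⟨0, hmem⟩ ?_)
      rintro E ⟨f, hf, hbf, rfl⟩
      exact energy_nonneg K d w hwK f hf
    rw [hzero K₁ hw₁, hzero K₂ hw₂, hzero (K₁.union K₂) hw]
    norm_num
  -- nondegenerate case
  obtain ⟨f₁₀, hf₁₀, hbf₁₀⟩ := h₁
  obtain ⟨f₂₀, hf₂₀, hbf₂₀⟩ := h₂
  have hne₁ : (ESet K₁ d w γ).Nonempty := ⟨_, f₁₀, hf₁₀, hbf₁₀, rfl⟩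
  have hne₂ : (ESet K₂ d w γ).Nonempty := ⟨_, f₂₀, hf₂₀, hbf₂₀, rfl⟩
  have hneu : (ESet (K₁.union K₂) d w γ).Nonempty := ⟨_, f₁₀, hsub₁ f₁₀ hf₁₀, hbf₁₀, rfl⟩
  set a := K₁.effResW d w γ with hadef
  set b := K₂.effResW d w γ with hbdef
  have ha : 0 < a := effResW_pos K₁ d w hw₁ γ hγ ⟨f₁₀, hf₁₀, hbf₁₀⟩
  have hb : 0 < b := effResW_pos K₂ d w hw₂ γ hγ ⟨f₂₀, hf₂₀, hbf₂₀⟩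
  have hab : 0 < a + b := by linarith
  -- the key upper bound
  have key_le : (K₁.union K₂).effResW d w γ ≤ a * b / (a + b) := by
    refine le_of_forall_pos_le_add fun ε hε => ?_
    set δ : ℝ := min (min 1 (ε / 2)) ((a + b) * ε / 2) with hδdef
    have hδ : 0 < δ := lt_min (lt_min one_pos (by linarith)) (by positivity)
    have hδ1 : δ ≤ 1 := le_trans (min_le_left _ _) (min_le_left _ _)
    have hδε : δ ≤ ε / 2 := le_trans (min_le_left _ _) (min_le_right _ _)
    have hδsq : δ * δ ≤ (a + b) * ε / 2 := by
      have := mul_le_mul hδ1 (min_le_right (min 1 (ε / 2)) ((a + b) * ε / 2)) hδ.le zero_le_one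
      rw [one_mul] at this
      exact this
    obtain ⟨E₁, hE₁mem, hE₁lt⟩ := Real.lt_sInf_add_pos hne₁ hδ
    obtain ⟨E₂, hE₂mem, hE₂lt⟩ := Real.lt_sInf_add_pos hne₂ hδ
    have haE₁ : a ≤ E₁ := by
      rw [hadef, effResW_eq_sInf_ESet]; exact csInf_le (ESet_bddBelow K₁ d w hw₁ γ) hE₁mem
    have hbE₂ : b ≤ E₂ := by
      rw [hbdef, effResW_eq_sInf_ESet]; exact csInf_le (ESet_bddBelow K₂ d w hw₂ γ) hE₂mem
    replace hE₁lt : E₁ < a + δ := hE₁lt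
    replace hE₂lt : E₂ < b + δ := hE₂lt
    have hE₁pos : 0 < E₁ := lt_of_lt_of_le ha haE₁
    have hE₂pos : 0 < E₂ := lt_of_lt_of_le hb hbE₂
    have hE₁₂ : 0 < E₁ + E₂ := by linarith
    obtain ⟨g₁, hg₁, hbg₁, hEg₁⟩ := hE₁mem
    obtain ⟨g₂, hg₂, hbg₂, hEg₂⟩ := hE₂mem
    set t : ℝ := E₂ / (E₁ + E₂) with htdef
    -- the combined flow
    have hmemu : (t ^ 2 * E₁ + (1 - t) ^ 2 * E₂) ∈ ESet (K₁.union K₂) d w γ := by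
      refine ⟨t • g₁ + (1 - t) • g₂, ?_, ?_, ?_⟩
      · intro σ hσ
        by_cases h1 : g₁ σ = 0
        · refine hsub₂ g₂ hg₂ σ fun h2 => hσ ?_
          simp [Pi.add_apply, Pi.smul_apply, h1, h2]
        · exact hsub₁ g₁ hg₁ σ h1
      · rw [Matrix.mulVec_add, Matrix.mulVec_smul, Matrix.mulVec_smul, hbg₁, hbg₂,
          ← add_smul]
        norm_num
      · simp only [Pi.add_apply]
        rw [esplit (t • g₁) ((1 - t) • g₂) ?_, escale, escale, hEg₁, hEg₂]
        intro σ
        have h0 := horth g₁ g₂ hg₁ hg₂ σ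
        simp only [Pi.smul_apply, smul_eq_mul]
        linear_combination (t * (1 - t)) * h0
    have hle1 : (K₁.union K₂).effResW d w γ ≤ E₁ * E₂ / (E₁ + E₂) := by
      have heq : t ^ 2 * E₁ + (1 - t) ^ 2 * E₂ = E₁ * E₂ / (E₁ + E₂) := by
        rw [htdef]; field_simp; ring
      rw [effResW_eq_sInf_ESet]
      exact heq ▸ csInf_le (ESet_bddBelow (K₁.union K₂) d w hw γ) hmemu
    have hle2 : E₁ * E₂ / (E₁ + E₂) ≤ (a + δ) * (b + δ) / (a + b) := by
      rw [div_le_div_iff₀ hE₁₂ hab]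
      have h1 : E₁ * E₂ ≤ (a + δ) * (b + δ) :=
        mul_le_mul hE₁lt.le hE₂lt.le hE₂pos.le (by linarith)
      have h2 : a + b ≤ E₁ + E₂ := by linarith
      nlinarith [mul_le_mul_of_nonneg_right h1 hab.le,
        mul_le_mul_of_nonneg_left h2 (by nlinarith : (0:ℝ) ≤ (a + δ) * (b + δ))]
    have hle3 : (a + δ) * (b + δ) / (a + b) ≤ a * b / (a + b) + ε := by
      have heq : a * b / (a + b) + ε = (a * b + ε * (a + b)) / (a + b) := by
        field_simp
      rw [heq, div_le_div_iff₀ hab hab]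
      have hstep : δ * (a + b) + δ * δ ≤ ε * (a + b) := by
        nlinarith [mul_le_mul_of_nonneg_right hδε hab.le]
      nlinarith [mul_le_mul_of_nonneg_right hstep hab.le]
    linarith
  refine ⟨?_, ?_⟩
  · have hinv : (a⁻¹ + b⁻¹)⁻¹ = a * b / (a + b) := by
      rw [inv_add_inv ha.ne' hb.ne', inv_div]
    rw [hinv]
    exact key_le
  · intro hspan
    have key_ge : a * b / (a + b) ≤ (K₁.union K₂).effResW d w γ := by
      rw [effResW_eq_sInf_ESet]
      refine le_csInf hneu ?_
      rintro E ⟨f, hf, hbf, rfl⟩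
      -- split the flow along K₁ and K₂
      set p₁ : SimpIdx V (d + 1) → ℝ :=
        fun σ => if (σ : Finset V) ∈ K₁.faces then f σ else 0 with hp₁def
      set p₂ : SimpIdx V (d + 1) → ℝ := fun σ => f σ - p₁ σ with hp₂def
      have hfeq : f = p₁ + p₂ := by
        funext σ; simp [hp₁def, hp₂def]
      have hsp₁ : K₁.supportedOn p₁ := by
        intro σ hσ
        rw [hp₁def] at hσ
        by_contra h
        simp [h] at hσ
      have hsp₂ : K₂.supportedOn p₂ := by
        intro σ hσ
        rw [hp₂def, hp₁def] at hσ
        by_cases h : (σ : Finset V) ∈ K₁.faces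
        · simp [h] at hσ
        · simp only [h, if_false, sub_zero] at hσ
          rcases Finset.mem_union.mp (hf σ hσ) with h' | h'
          · exact absurd h' h
          · exact h'
      have hbsum : gbdry V d *ᵥ p₁ + gbdry V d *ᵥ p₂ = γ := by
        rw [← Matrix.mulVec_add, ← hfeq, hbf]
      -- the boundary of p₁ lies in both images, hence in the span of γ
      have hmem₁ : gbdry V d *ᵥ p₁ ∈
          {x : SimpIdx V d → ℝ | ∃ f, K₁.supportedOn f ∧ gbdry V d *ᵥ f = x} :=
        ⟨p₁, hsp₁, rfl⟩
      have hmem₂ : gbdry V d *ᵥ p₁ ∈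
          {x : SimpIdx V d → ℝ | ∃ f, K₂.supportedOn f ∧ gbdry V d *ᵥ f = x} := by
        refine ⟨f₂₀ - p₂, ?_, ?_⟩
        · intro σ hσ
          by_cases h1 : f₂₀ σ = 0
          · refine hsp₂ σ fun h2 => hσ ?_
            simp [Pi.sub_apply, h1, h2]
          · exact hf₂₀ σ h1
        · rw [Matrix.mulVec_sub, hbf₂₀, ← hbsum]
          abel
      have hmemspan : gbdry V d *ᵥ p₁ ∈
          ({x : SimpIdx V d → ℝ | ∃ f, K₁.supportedOn f ∧ gbdry V d *ᵥ f = x} ∩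
            {x : SimpIdx V d → ℝ | ∃ f, K₂.supportedOn f ∧ gbdry V d *ᵥ f = x}) :=
        ⟨hmem₁, hmem₂⟩
      rw [hspan] at hmemspan
      obtain ⟨t, ht⟩ := Submodule.mem_span_singleton.mp hmemspan
      have hbp₂ : gbdry V d *ᵥ p₂ = (1 - t) • γ := by
        have : gbdry V d *ᵥ p₂ = γ - gbdry V d *ᵥ p₁ := by
          rw [← hbsum]; abel
        rw [this, ← ht, sub_smul, one_smul]
      have hbp₁ : gbdry V d *ᵥ p₁ = t • γ := ht.symm
      -- energy lower bounds for the two pieces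
      have hE₁lb : t ^ 2 * a ≤ ∑ σ : SimpIdx V (d + 1), p₁ σ ^ 2 / w σ := by
        by_cases htz : t = 0
        · rw [htz]
          simpa using energy_nonneg K₁ d w hw₁ p₁ hsp₁
        · have hmem : (t⁻¹ ^ 2 * ∑ σ : SimpIdx V (d + 1), p₁ σ ^ 2 / w σ)
              ∈ ESet K₁ d w γ := by
            refine ⟨t⁻¹ • p₁, ?_, ?_, (escale t⁻¹ p₁).symm⟩
            · intro σ hσ
              refine hsp₁ σ fun h => hσ ?_
              simp [Pi.smul_apply, h]
            · rw [Matrix.mulVec_smul, hbp₁, smul_smul, inv_mul_cancel₀ htz, one_smul]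
          have := csInf_le (ESet_bddBelow K₁ d w hw₁ γ) hmem
          rw [effResW_eq_sInf_ESet] at hadef
          rw [← hadef] at this
          have ht2 : (0:ℝ) < t ^ 2 := by positivity
          calc t ^ 2 * a ≤ t ^ 2 * (t⁻¹ ^ 2 * ∑ σ : SimpIdx V (d + 1), p₁ σ ^ 2 / w σ) :=
                mul_le_mul_of_nonneg_left this ht2.le
            _ = ∑ σ : SimpIdx V (d + 1), p₁ σ ^ 2 / w σ := hcancel _ _ htz
      have hE₂lb : (1 - t) ^ 2 * b ≤ ∑ σ : SimpIdx V (d + 1), p₂ σ ^ 2 / w σ := by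
        by_cases htz : (1 - t) = 0
        · rw [htz]
          simpa using energy_nonneg K₂ d w hw₂ p₂ hsp₂
        · have hmem : ((1 - t)⁻¹ ^ 2 * ∑ σ : SimpIdx V (d + 1), p₂ σ ^ 2 / w σ)
              ∈ ESet K₂ d w γ := by
            refine ⟨(1 - t)⁻¹ • p₂, ?_, ?_, (escale (1 - t)⁻¹ p₂).symm⟩
            · intro σ hσ
              refine hsp₂ σ fun h => hσ ?_
              simp [Pi.smul_apply, h]
            · rw [Matrix.mulVec_smul, hbp₂, smul_smul, inv_mul_cancel₀ htz, one_smul]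
          have := csInf_le (ESet_bddBelow K₂ d w hw₂ γ) hmem
          rw [effResW_eq_sInf_ESet] at hbdef
          rw [← hbdef] at this
          have ht2 : (0:ℝ) < (1 - t) ^ 2 := by
            have := sub_ne_zero.mpr (fun h : (1:ℝ) = t => htz (by rw [h]; ring))
            positivity
          calc (1 - t) ^ 2 * b
              ≤ (1 - t) ^ 2 * ((1 - t)⁻¹ ^ 2 * ∑ σ : SimpIdx V (d + 1), p₂ σ ^ 2 / w σ) :=
                mul_le_mul_of_nonneg_left this ht2.le
            _ = ∑ σ : SimpIdx V (d + 1), p₂ σ ^ 2 / w σ := hcancel _ _ htz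
      have hsum : ∑ σ : SimpIdx V (d + 1), f σ ^ 2 / w σ
          = ∑ σ : SimpIdx V (d + 1), p₁ σ ^ 2 / w σ
            + ∑ σ : SimpIdx V (d + 1), p₂ σ ^ 2 / w σ := by
        rw [hfeq]
        exact esplit p₁ p₂ (horth p₁ p₂ hsp₁ hsp₂)
      rw [hsum, div_le_iff₀ hab]
      nlinarith [sq_nonneg ((a + b) * t - b)]
    have hinv : (a⁻¹ + b⁻¹)⁻¹ = a * b / (a + b) := by
      rw [inv_add_inv ha.ne' hb.ne', inv_div]
    rw [hinv]
    exact le_antisymm key_le key_ge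
end

section
/- Let B = ∂_d[L, L₀] be a k×k square submatrix of the integral d-boundary matrix of a simplicial complex, obtained by including columns of d-simplices in L and excluding rows of (d-1)-simplices in L₀. Then |det B| is at most the cardinality of the torsion subgroup of the relative homology group H_{d-1}(L, L₀; ℤ). -/
open Matrix

variable {V : Type} [Fintype V] [LinearOrder V]

/-
Extending a chain on the rows of `B` by zero embeds `ℤᵏ` into the relative `d`-chains as a
saturated coordinate sublattice which contains the relative boundaries, these being the
extensions of the columns of `B`. Since `det B ≠ 0`, every element of `ℤᵏ` has a multiple in
`im B`; as `∂ ∘ ∂ = 0` and the group of relative cycles is saturated, the sublattice consists of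
cycles, and `x ↦ [x]` identifies `ℤᵏ ⧸ im B` with the torsion of `H_d(L, L₀; ℤ)`. The order of
`ℤᵏ ⧸ im B` is `|det B|` by the Smith normal form.
-/

open Function nonZeroDivisors

namespace Submodule

variable {R M P : Type*} [CommRing R] [AddCommGroup M] [Module R M] [AddCommGroup P] [Module R P]

def IsSaturated (N : Submodule R M) : Prop :=
  ∀ a ∈ R⁰, ∀ m : M, a • m ∈ N → m ∈ N

variable {ι : P →ₗ[R] M} {N : Submodule R P} {Z : Submodule R M}

theorem smul_mem_of_isTorsion_quotient (hN : Module.IsTorsion R (P ⧸ N)) (x : P) :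
    ∃ a : R⁰, (a : R) • x ∈ N := by
  obtain ⟨a, ha⟩ := @hN (N.mkQ x)
  exact ⟨a, (Quotient.mk_eq_zero N).mp ha⟩

theorem range_le_of_isSaturated (hN : Module.IsTorsion R (P ⧸ N)) (hZ : Z.IsSaturated)
    (hNZ : N.map ι ≤ Z) : LinearMap.range ι ≤ Z := by
  rintro _ ⟨x, rfl⟩
  obtain ⟨a, ha⟩ := smul_mem_of_isTorsion_quotient hN x
  exact hZ a a.2 (ι x) (hNZ ⟨_, ha, map_smul ι _ x⟩)

noncomputable def quotientEquivTorsion (hι : Injective ι)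
    (hsat : (LinearMap.range ι).IsSaturated)
    (hN : Module.IsTorsion R (P ⧸ N)) (hZ : Z.IsSaturated) (hNZ : N.map ι ≤ Z) :
    (P ⧸ N) ≃ₗ[R] torsion R (Z ⧸ (N.map ι).comap Z.subtype) :=
  let ψ : P →ₗ[R] Z ⧸ (N.map ι).comap Z.subtype := ((N.map ι).comap Z.subtype).mkQ ∘ₗ
    ι.codRestrict Z fun x => range_le_of_isSaturated hN hZ hNZ ⟨x, rfl⟩
  have hker : LinearMap.ker ψ = N := by
    ext x
    simp [ψ, hι.eq_iff]
  have hrange : LinearMap.range ψ = torsion R (Z ⧸ (N.map ι).comap Z.subtype) := by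
    apply le_antisymm
    · rintro _ ⟨x, rfl⟩
      obtain ⟨a, ha⟩ := smul_mem_of_isTorsion_quotient hN x
      refine ⟨a, ?_⟩
      rw [Submonoid.smul_def, ← map_smul, ← LinearMap.mem_ker, hker]
      exact ha
    · intro q hq
      obtain ⟨a, ha⟩ := (mem_torsion_iff q).mp hq
      obtain ⟨⟨z, hzZ⟩, rfl⟩ := Quotient.mk_surjective _ q
      have haz : (a : R) • z ∈ N.map ι :=
        (Quotient.mk_eq_zero ((N.map ι).comap Z.subtype)).mp ha
      obtain ⟨x, rfl⟩ := hsat a a.2 z (LinearMap.map_le_range haz)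
      exact ⟨x, rfl⟩
  (quotEquivOfEq N _ hker.symm).trans (ψ.quotKerEquivRange.trans (LinearEquiv.ofEq _ _ hrange))

end Submodule

section Saturation

variable {R : Type*} [CommRing R]

theorem LinearMap.isSaturated_ker {M N : Type*} [AddCommGroup M] [Module R M] [AddCommGroup N]
    [Module R N] [Module.IsTorsionFree R N] (f : M →ₗ[R] N) : (ker f).IsSaturated := by
  intro a ha m hm
  rw [mem_ker, map_smul] at hm
  exact (isRegular_iff_eq_zero_of_mul.mpr ha).smul_eq_zero_iff_right.mp hm

theorem Function.ExtendByZero.linearMap_injective {ι η : Type*} {s : ι → η} (hs : Injective s) :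
    Injective (ExtendByZero.linearMap R s) := fun x y h => by
  funext i
  simpa [hs.extend_apply] using congrFun h (s i)

theorem Function.ExtendByZero.isSaturated_range_linearMap {ι η : Type*} {s : ι → η}
    (hs : Injective s) : (LinearMap.range (ExtendByZero.linearMap R s)).IsSaturated := by
  rintro a ha m ⟨x, hx⟩
  refine ⟨m ∘ s, funext fun j => ?_⟩
  by_cases hj : ∃ i, s i = j
  · obtain ⟨i, rfl⟩ := hj
    simp [hs.extend_apply]
  · have hxj := congrFun hx j
    simp only [linearMap_apply, extend_apply' _ _ _ hj, Pi.zero_apply, Pi.smul_apply,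
      smul_eq_mul] at hxj ⊢
    exact ((mul_left_mem_nonZeroDivisors_eq_zero_iff ha).mp hxj.symm).symm

variable {n : Type*} [Fintype n] [DecidableEq n]

theorem Matrix.isTorsion_quotient_range_toLin' {B : Matrix n n R} (hB : B.det ∈ R⁰) :
    Module.IsTorsion R ((n → R) ⧸ LinearMap.range (toLin' B)) := by
  rintro ⟨x⟩
  refine ⟨⟨B.det, hB⟩, (Submodule.Quotient.mk_eq_zero _).mpr ⟨B.adjugate *ᵥ x, ?_⟩⟩
  rw [toLin'_apply, mulVec_mulVec, mul_adjugate, smul_mulVec, one_mulVec]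

theorem Matrix.natCard_quotient_range_toLin' {B : Matrix n n ℤ} (hB : B.det ≠ 0) :
    Nat.card ((n → ℤ) ⧸ LinearMap.range (toLin' B)) = B.det.natAbs := by
  rw [← Submodule.natAbs_det_equiv _
    (LinearEquiv.ofInjective _ (mulVec_injective_of_det_ne_zero hB)), ← LinearMap.det_toLin' B]
  rfl

end Saturation

section Boundary

variable {α : Type} [LinearOrder α]

theorem exists_eq_insert_of_bsign_ne_zero {τ σ : Finset α} (h : bsign τ σ ≠ 0) :
    ∃ v ∉ τ, σ = insert v τ := by
  obtain ⟨hsub, hcard⟩ : τ ⊆ σ ∧ τ.card + 1 = σ.card := by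
    by_contra hτσ
    exact h (if_neg hτσ)
  obtain ⟨v, hv⟩ := Finset.card_eq_one.mp (by rw [Finset.card_sdiff_of_subset hsub]; omega)
  refine ⟨v, (Finset.mem_sdiff.mp (hv ▸ Finset.mem_singleton_self v)).2, ?_⟩
  rw [Finset.insert_eq, ← hv, Finset.sdiff_union_of_subset hsub]

theorem subset_of_bsign_ne_zero {τ σ : Finset α} (h : bsign τ σ ≠ 0) : τ ⊆ σ := by
  obtain ⟨v, -, rfl⟩ := exists_eq_insert_of_bsign_ne_zero h
  exact Finset.subset_insert v τ

theorem bsign_insert {τ : Finset α} {v : α} (hv : v ∉ τ) :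
    bsign τ (insert v τ) = (-1) ^ (τ.filter (· < v)).card := by
  rw [bsign, if_pos ⟨Finset.subset_insert v τ, (Finset.card_insert_of_notMem hv).symm⟩,
    Finset.insert_sdiff_cancel hv]
  simp [Finset.filter_insert]

theorem bsign_mul_bsign_add_bsign_mul_bsign {ρ : Finset α} {u v : α} (hu : u ∉ ρ) (hv : v ∉ ρ)
    (huv : u ≠ v) :
    bsign ρ (insert u ρ) * bsign (insert u ρ) (insert v (insert u ρ)) +
      bsign ρ (insert v ρ) * bsign (insert v ρ) (insert u (insert v ρ)) = 0 := by
  wlog hlt : u < v generalizing u v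
  · rw [add_comm]
    exact this hv hu huv.symm (huv.lt_or_gt.resolve_left hlt)
  have hvu : v ∉ insert u ρ := by simp [huv.symm, hv]
  have huv' : u ∉ insert v ρ := by simp [huv, hu]
  rw [bsign_insert hu, bsign_insert hv, bsign_insert hvu, bsign_insert huv',
    Finset.filter_insert, Finset.filter_insert, if_pos hlt, if_neg hlt.not_gt,
    Finset.card_insert_of_notMem (by simp [hu])]
  ring

end Boundary

theorem sum_bsign_mul_bsign (e : ℕ) (ρ : SimpIdx V e) (σ : SimpIdx V (e + 2)) :
    ∑ τ : SimpIdx V (e + 1), bsign ρ.1 τ.1 * bsign τ.1 σ.1 = 0 := by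
  -- A nonzero term at `τ = ρ ∪ {u}` forces `σ = ρ ∪ {u, v}`; the only other nonzero term is then
  -- at `ρ ∪ {v}`, and the two cancel.
  by_contra hne
  obtain ⟨τ, -, hτ⟩ := Finset.exists_ne_zero_of_sum_ne_zero hne
  obtain ⟨u, hu, hτρ⟩ := exists_eq_insert_of_bsign_ne_zero (left_ne_zero_of_mul hτ)
  obtain ⟨v, hvτ, hστ⟩ := exists_eq_insert_of_bsign_ne_zero (right_ne_zero_of_mul hτ)
  have hv : v ≠ u ∧ v ∉ ρ.1 := by simpa [hτρ] using hvτ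
  let τ' : SimpIdx V (e + 1) := ⟨insert v ρ.1, by rw [Finset.card_insert_of_notMem hv.2, ρ.2]⟩
  have hττ' : τ ≠ τ' := by
    rintro rfl
    exact hvτ (Finset.mem_insert_self v ρ.1)
  have hσ : σ.1 = insert v (insert u ρ.1) := by rw [hστ, hτρ]
  refine hne ((Fintype.sum_eq_add τ τ' hττ' fun κ hκ => ?_).trans ?_)
  · by_contra hκ0
    obtain ⟨w, hw, hκρ⟩ := exists_eq_insert_of_bsign_ne_zero (left_ne_zero_of_mul hκ0)
    have hwσ : w ∈ σ.1 :=
      subset_of_bsign_ne_zero (right_ne_zero_of_mul hκ0) (hκρ ▸ Finset.mem_insert_self w ρ.1)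
    rw [hσ, Finset.mem_insert, Finset.mem_insert] at hwσ
    rcases hwσ with rfl | rfl | hwρ
    · exact hκ.2 (Subtype.ext hκρ)
    · exact hκ.1 (Subtype.ext (hκρ.trans hτρ.symm))
    · exact hw hwρ
  · have h := bsign_mul_bsign_add_bsign_mul_bsign hu hv.2 hv.1.symm
    rwa [Finset.insert_comm u v, ← hσ, ← hτρ] at h

theorem relBdryZ_mul_relBdryZ (L L₀ : SComplex V) (e : ℕ) :
    relBdryZ L L₀ e * relBdryZ L L₀ (e + 1) = 0 := by
  ext ρ σ
  rw [mul_apply, Matrix.zero_apply]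
  by_cases hρσ : (ρ.1 ∈ L.faces ∧ ρ.1 ∉ L₀.faces) ∧ (σ.1 ∈ L.faces ∧ σ.1 ∉ L₀.faces)
  · rw [← sum_bsign_mul_bsign e ρ σ]
    refine Finset.sum_congr rfl fun τ _ => ?_
    by_cases h : bsign ρ.1 τ.1 * bsign τ.1 σ.1 = 0
    · simp only [relBdryZ]
      split_ifs <;> simp [h]
    have hτL : τ.1 ∈ L.faces := L.down_closed _ hρσ.2.1 _
      (subset_of_bsign_ne_zero (right_ne_zero_of_mul h))
      (Finset.card_pos.mp (by rw [τ.2]; omega))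
    have hτL₀ : τ.1 ∉ L₀.faces := fun hτ => hρσ.1.2 <| L₀.down_closed _ hτ _
      (subset_of_bsign_ne_zero (left_ne_zero_of_mul h))
      (Finset.card_pos.mp (by rw [ρ.2]; omega))
    simp [relBdryZ, hρσ, hτL, hτL₀]
  · refine Finset.sum_eq_zero fun τ _ => ?_
    simp only [relBdryZ]
    split_ifs <;> simp_all

theorem range_relBdryZ_le_relKer (L L₀ : SComplex V) (d : ℕ) :
    LinearMap.range (toLin' (relBdryZ L L₀ d)) ≤ relKer L L₀ d := by
  cases d with
  | zero => exact le_top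
  | succ e =>
    rintro _ ⟨y, rfl⟩
    change toLin' (relBdryZ L L₀ e) (toLin' (relBdryZ L L₀ (e + 1)) y) = 0
    rw [toLin'_apply, toLin'_apply, mulVec_mulVec, relBdryZ_mul_relBdryZ, zero_mulVec]

theorem isSaturated_relKer (L L₀ : SComplex V) (d : ℕ) : (relKer L L₀ d).IsSaturated := by
  cases d with
  | zero => exact fun _ _ _ _ => Submodule.mem_top
  | succ e => exact LinearMap.isSaturated_ker _

theorem toLin'_relBdryZ {L L₀ : SComplex V} {d : ℕ} {ι κ : Type*} [Fintype κ] [DecidableEq κ]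
    {r : ι → SimpIdx V d} {c : κ → SimpIdx V (d + 1)}
    (hrinj : Injective r) (hcinj : Injective c)
    (hr : ∀ τ : SimpIdx V d, (τ.1 ∈ L.faces ∧ τ.1 ∉ L₀.faces) ↔ τ ∈ Set.range r)
    (hc : ∀ σ : SimpIdx V (d + 1), (σ.1 ∈ L.faces ∧ σ.1 ∉ L₀.faces) ↔ σ ∈ Set.range c) :
    toLin' (relBdryZ L L₀ d) = ExtendByZero.linearMap ℤ r ∘ₗ
      toLin' ((gbdryZ V d).submatrix r c) ∘ₗ LinearMap.funLeft ℤ ℤ c := by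
  refine LinearMap.ext fun y => funext fun τ => ?_
  simp only [LinearMap.comp_apply, toLin'_apply, ExtendByZero.linearMap_apply,
    mulVec, dotProduct]
  by_cases hτ : τ ∈ Set.range r
  · obtain ⟨i, rfl⟩ := hτ
    have hi := (hr (r i)).mpr ⟨i, rfl⟩
    rw [hrinj.extend_apply]
    refine (Fintype.sum_of_injective c hcinj _ _ (fun σ hσ => ?_) (fun j => ?_)).symm
    · rw [← hc] at hσ
      simp [relBdryZ, hσ]
    · simp [relBdryZ, hi, (hc (c j)).mpr ⟨j, rfl⟩, gbdryZ]
  · rw [extend_apply' _ _ _ hτ, Pi.zero_apply]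
    rw [← hr] at hτ
    refine Finset.sum_eq_zero fun σ _ => ?_
    rw [relBdryZ, if_neg fun h => hτ ⟨h.1, h.2.1⟩, zero_mul]

theorem range_toLin'_relBdryZ {L L₀ : SComplex V} {d k : ℕ} {r : Fin k → SimpIdx V d}
    {c : Fin k → SimpIdx V (d + 1)} (hrinj : Injective r) (hcinj : Injective c)
    (hr : ∀ τ : SimpIdx V d, (τ.1 ∈ L.faces ∧ τ.1 ∉ L₀.faces) ↔ τ ∈ Set.range r)
    (hc : ∀ σ : SimpIdx V (d + 1), (σ.1 ∈ L.faces ∧ σ.1 ∉ L₀.faces) ↔ σ ∈ Set.range c) :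
    LinearMap.range (toLin' (relBdryZ L L₀ d)) =
      (LinearMap.range (toLin' ((gbdryZ V d).submatrix r c))).map
        (ExtendByZero.linearMap ℤ r) := by
  rw [toLin'_relBdryZ hrinj hcinj hr hc, LinearMap.range_comp,
    LinearMap.range_comp_of_range_eq_top _
      (LinearMap.range_eq_top.mpr (LinearMap.funLeft_surjective_of_injective _ _ _ hcinj))]

theorem det_relative_boundary_le_torsion_card_general
    {V : Type} [Fintype V] [LinearOrder V] (L L₀ : SComplex V) (d : ℕ)
    (k : ℕ) (r : Fin k → SimpIdx V d) (c : Fin k → SimpIdx V (d + 1))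
    (hrinj : Function.Injective r) (hcinj : Function.Injective c)
    (hr : ∀ τ : SimpIdx V d,
      ((τ : Finset V) ∈ L.faces ∧ (τ : Finset V) ∉ L₀.faces) ↔ τ ∈ Set.range r)
    (hc : ∀ σ : SimpIdx V (d + 1),
      ((σ : Finset V) ∈ L.faces ∧ (σ : Finset V) ∉ L₀.faces) ↔ σ ∈ Set.range c) :
    (((gbdryZ V d).submatrix r c).det).natAbs ≤ relTorsionCard L L₀ d := by
  set B := (gbdryZ V d).submatrix r c
  rcases eq_or_ne B.det 0 with hdet | hdet
  · simp [hdet]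
  have hA := range_toLin'_relBdryZ hrinj hcinj hr hc
  have e := Submodule.quotientEquivTorsion (ExtendByZero.linearMap_injective (R := ℤ) hrinj)
    (ExtendByZero.isSaturated_range_linearMap hrinj)
    (isTorsion_quotient_range_toLin' (mem_nonZeroDivisors_of_ne_zero hdet))
    (isSaturated_relKer L L₀ d) (hA ▸ range_relBdryZ_le_relKer L L₀ d)
  rw [relTorsionCard, hA, ← Nat.card_congr e.toEquiv, natCard_quotient_range_toLin' hdet]

/-- **Determinant bound by relative torsion.** Let `B = ∂[L, L₀]` be a `k × k` square
submatrix of the integral boundary matrix of a simplicial complex `K`, obtained by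
including the columns of the `(d+1)`-simplices of `L` outside `L₀` and the rows of
the `d`-simplices of `L` outside `L₀`. Then `|det B|` is at most the cardinality of
the torsion subgroup of the relative homology group `H_d(L, L₀; ℤ)`. -/
theorem det_relative_boundary_le_torsion_card
    {V : Type} [Fintype V] [LinearOrder V] (K L L₀ : SComplex V)
    (hL : L.faces ⊆ K.faces) (hL₀ : L₀.faces ⊆ L.faces) (d : ℕ)
    (hdimL : ∀ s ∈ L.faces, s.card ≤ d + 2)
    (hdimL₀ : ∀ s ∈ L₀.faces, s.card ≤ d + 1)
    (k : ℕ) (r : Fin k → SimpIdx V d) (c : Fin k → SimpIdx V (d + 1))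
    (hrinj : Function.Injective r) (hcinj : Function.Injective c)
    (hr : ∀ τ : SimpIdx V d,
      ((τ : Finset V) ∈ L.faces ∧ (τ : Finset V) ∉ L₀.faces) ↔ τ ∈ Set.range r)
    (hc : ∀ σ : SimpIdx V (d + 1),
      ((σ : Finset V) ∈ L.faces ∧ (σ : Finset V) ∉ L₀.faces) ↔ σ ∈ Set.range c) :
    (((gbdryZ V d).submatrix r c).det).natAbs ≤ relTorsionCard L L₀ d :=
  det_relative_boundary_le_torsion_card_general L L₀ d k r c hrinj hcinj hr hc
end

section
/- Every square submatrix of the d-th boundary matrix ∂_d of a simplicial complex has determinant of absolute value at most (√(d+1))^n where n = min{n_{d-1}, n_d}; consequently the maximal rank T_max(K) of any (d-1)-dimensional relative torsion group of K is O((√(d+1))^n). -/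
open Matrix

variable {V : Type} [Fintype V] [LinearOrder V]

/-! Each column of `∂` has `d + 2` nonzero entries, all `±1`, so by Hadamard's inequality a
square submatrix of size `k ≤ min n_d n_{d+1}` has determinant at most `√(d+2)ᵏ`.
For the torsion, take a basic minor `B_{s,t}` of the relative boundary matrix `B`: a nonsingular
square submatrix whose rows `s` span the row space. Restricting chains to the rows `s` embeds
the torsion of `H_d(L, L₀) = W ⧸ (W ⊓ im B)` into `ℤ^s ⧸ im B_s`, a quotient of
`ℤ^s ⧸ im B_{s,t}`, which has order `|det B_{s,t}|`. Being nonsingular, `B_{s,t}` only involves simplices of `L \ L₀`,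
so it is a submatrix of `∂` and the first bound applies. -/

theorem exists_fin_linearIndependent_comp_span_eq {F M κ : Type*} [DivisionRing F]
    [AddCommGroup M] [Module F M] [Finite κ] (v : κ → M) :
    ∃ (r : ℕ) (t : Fin r → κ), LinearIndependent F (v ∘ t) ∧
      Submodule.span F (Set.range (v ∘ t)) = Submodule.span F (Set.range v) := by
  obtain ⟨κ', a, ha, hspan, hli⟩ := exists_linearIndependent' F v
  have : Finite κ' := Finite.of_injective a ha
  let e := Finite.equivFin κ'
  refine ⟨_, a ∘ e.symm, hli.comp _ e.symm.injective, ?_⟩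
  rw [← hspan, ← Function.comp_assoc, e.symm.surjective.range_comp]

namespace Matrix

variable {ι κ : Type*} [Fintype κ]

theorem abs_det_le_prod_sqrt_sum_sq {k : ℕ} (A : Matrix (Fin k) (Fin k) ℝ) :
    |A.det| ≤ ∏ j, √(∑ i, A i j ^ 2) := by
  have : Fact (Module.finrank ℝ (EuclideanSpace ℝ (Fin k)) = k) := ⟨finrank_euclideanSpace_fin⟩
  let b := EuclideanSpace.basisFun (Fin k) ℝ
  let v : Fin k → EuclideanSpace ℝ (Fin k) := fun j => WithLp.toLp 2 (A.col j)
  have hdet : A.det = b.toBasis.det v := by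
    rw [Module.Basis.det_apply]
    rfl
  calc |A.det| = |b.toBasis.orientation.volumeForm v| := by
        rw [hdet, b.toBasis.orientation.volumeForm_robust' b]
    _ ≤ ∏ j, ‖v j‖ := Orientation.abs_volumeForm_apply_le _ v
    _ = ∏ j, √(∑ i, A i j ^ 2) := by simp [v, EuclideanSpace.norm_eq]

theorem injective_of_det_submatrix_ne_zero {m n o R : Type*} [Fintype m] [DecidableEq m]
    [CommRing R] {A : Matrix n o R} {s : m → n} {t : m → o} (h : (A.submatrix s t).det ≠ 0) :
    Function.Injective s ∧ Function.Injective t := by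
  refine ⟨fun i j hij => ?_, fun i j hij => ?_⟩ <;> by_contra hne <;> apply h
  · exact det_zero_of_row_eq hne (funext fun _ => by simp [hij])
  · exact det_zero_of_column_eq hne fun _ => by simp [hij]

section Field

variable {F : Type*} [Field F]

theorem exists_det_submatrix_ne_zero_of_linearIndependent_row {r : ℕ}
    (A : Matrix (Fin r) κ F) (hA : LinearIndependent F A.row) :
    ∃ t : Fin r → κ, (A.submatrix id t).det ≠ 0 := by
  classical
  obtain ⟨r', t, hli, hspan⟩ := exists_fin_linearIndependent_comp_span_eq (F := F) A.col
  have hr' : r' = r := by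
    have := finrank_span_eq_card hli
    rw [hspan, ← rank_eq_finrank_span_cols, rank_eq_finrank_span_row,
      finrank_span_eq_card hA] at this
    simpa using this.symm
  subst hr'
  exact ⟨t, (isUnit_iff_isUnit_det _).mp (linearIndependent_cols_iff_isUnit.mp hli) |>.ne_zero⟩

theorem exists_basic_minor [Fintype ι] (B : Matrix ι κ F) :
    ∃ (r : ℕ) (s : Fin r → ι) (t : Fin r → κ), (B.submatrix s t).det ≠ 0 ∧
      ∀ v, B.submatrix s id *ᵥ v = 0 → B *ᵥ v = 0 := by
  obtain ⟨r, s, hli, hspan⟩ := exists_fin_linearIndependent_comp_span_eq (F := F) B.row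
  obtain ⟨t, ht⟩ := exists_det_submatrix_ne_zero_of_linearIndependent_row (B.submatrix s id) hli
  refine ⟨r, s, t, ht, fun v hv => funext fun i => ?_⟩
  have hrow : B i ∈ Submodule.span F (Set.range (B.row ∘ s)) := by
    rw [hspan]
    exact Submodule.subset_span ⟨i, rfl⟩
  have hspan_le : Submodule.span F (Set.range (B.row ∘ s)) ≤
      LinearMap.ker ((dotProductBilin F F).flip v) := by
    rw [Submodule.span_le]
    rintro _ ⟨q, rfl⟩
    exact congrFun hv q
  exact hspan_le hrow

end Field

section Domain

variable {R : Type*} [CommRing R] [IsDomain R]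

theorem exists_basic_minor_of_isDomain [Fintype ι] (B : Matrix ι κ R) :
    ∃ (r : ℕ) (s : Fin r → ι) (t : Fin r → κ), (B.submatrix s t).det ≠ 0 ∧
      ∀ v, B.submatrix s id *ᵥ v = 0 → B *ᵥ v = 0 := by
  let f := algebraMap R (FractionRing R)
  have hf : Function.Injective f := IsFractionRing.injective R (FractionRing R)
  obtain ⟨r, s, t, hdet, hker⟩ := exists_basic_minor (B.map f)
  refine ⟨r, s, t, fun h => hdet ?_, fun v hv => funext fun i => hf ?_⟩
  · rw [submatrix_map, ← RingHom.mapMatrix_apply, ← RingHom.map_det, h, map_zero]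
  · have := congrFun (hker (f ∘ v) (funext fun q => ?_)) i
    · rwa [← RingHom.map_mulVec, Pi.zero_apply, ← map_zero f] at this
    · rw [submatrix_map, ← RingHom.map_mulVec, hv, Pi.zero_apply, map_zero, Pi.zero_apply]

theorem eq_mulVec_of_smul_eq_mulVec {m : Type*} (B : Matrix ι κ R) (s : m → ι)
    (hker : ∀ v, B.submatrix s id *ᵥ v = 0 → B *ᵥ v = 0) {k : R} (hk : k ≠ 0)
    {x : ι → R} {y z : κ → R} (hy : k • x = B *ᵥ y) (hz : x ∘ s = B.submatrix s id *ᵥ z) :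
    x = B *ᵥ z := by
  have hsub : B.submatrix s id *ᵥ (y - k • z) = 0 := by
    have hys : B.submatrix s id *ᵥ y = k • (x ∘ s) := by
      ext q
      exact (congrFun hy (s q)).symm
    rw [mulVec_sub, mulVec_smul, hys, hz, sub_self]
  apply smul_right_injective (ι → R) hk
  change k • x = k • (B *ᵥ z)
  rw [hy, ← mulVec_smul, ← sub_eq_zero, ← mulVec_sub]
  exact hker _ hsub

open Submodule in
theorem natCard_torsion_quotient_le [DecidableEq κ] {m : Type*} (B : Matrix ι κ R)
    (W : Submodule R (ι → R)) (s : m → ι) (hker : ∀ v, B.submatrix s id *ᵥ v = 0 → B *ᵥ v = 0)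
    [Finite ((m → R) ⧸ LinearMap.range (toLin' (B.submatrix s id)))] :
    Nat.card (torsion R (W ⧸ comap W.subtype (LinearMap.range (toLin' B)))) ≤
      Nat.card ((m → R) ⧸ LinearMap.range (toLin' (B.submatrix s id))) := by
  let N := LinearMap.range (toLin' B)
  let Ns := LinearMap.range (toLin' (B.submatrix s id))
  let restrict : W →ₗ[R] (m → R) := LinearMap.funLeft R R s ∘ₗ W.subtype
  have hN : comap W.subtype N ≤ comap restrict Ns := by
    rintro w ⟨y, hy⟩
    exact ⟨y, by rw [toLin'_apply] at hy ⊢; exact funext fun q => congrFun hy (s q)⟩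
  let φ := (comap W.subtype N).mapQ Ns restrict hN ∘ₗ (torsion R _).subtype
  refine Nat.card_le_card_of_injective φ ((injective_iff_map_eq_zero φ).mpr ?_)
  rintro ⟨z, k, hkz⟩ hz
  obtain ⟨w, rfl⟩ := (comap W.subtype N).mkQ_surjective z
  obtain ⟨y, hy⟩ : k • (w : ι → R) ∈ N := by
    rwa [Submonoid.smul_def, ← map_smul, mkQ_apply, Quotient.mk_eq_zero] at hkz
  obtain ⟨z, hz⟩ : restrict w ∈ Ns := (Quotient.mk_eq_zero _).mp hz
  rw [toLin'_apply] at hy hz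
  have hw : (w : ι → R) ∈ N :=
    ⟨z, (eq_mulVec_of_smul_eq_mulVec B s hker (nonZeroDivisors.coe_ne_zero k) hy.symm hz.symm).symm⟩
  exact Subtype.ext ((Quotient.mk_eq_zero _).mpr hw)

end Domain

theorem natCard_quotient_range_toLin'_s11 {n : Type*} [Fintype n] [DecidableEq n]
    (A : Matrix n n ℤ) (hA : A.det ≠ 0) :
    Nat.card ((n → ℤ) ⧸ LinearMap.range (toLin' A)) = A.det.natAbs := by
  let bN := Module.Basis.span (linearIndependent_cols_of_det_ne_zero hA)
  rw [toLin'_apply', range_mulVecLin, ← Submodule.natAbs_det_basis_change (Pi.basisFun ℤ n) _ bN,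
    Pi.basisFun_det_apply]
  have : of (Subtype.val ∘ bN) = Aᵀ := by
    ext i j
    simp [bN, Module.Basis.span_apply]
  rw [this, det_transpose]

open Submodule in
theorem exists_det_submatrix_ne_zero_natCard_torsion_le [Fintype ι] [DecidableEq κ]
    (B : Matrix ι κ ℤ) (W : Submodule ℤ (ι → ℤ)) :
    ∃ (r : ℕ) (s : Fin r → ι) (t : Fin r → κ), (B.submatrix s t).det ≠ 0 ∧
      Nat.card (torsion ℤ (W ⧸ comap W.subtype (LinearMap.range (toLin' B)))) ≤
        (B.submatrix s t).det.natAbs := by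
  obtain ⟨r, s, t, hdet, hker⟩ := B.exists_basic_minor_of_isDomain
  have hcard := natCard_quotient_range_toLin'_s11 _ hdet
  have hle : LinearMap.range (toLin' (B.submatrix s t)) ≤
      LinearMap.range (toLin' (B.submatrix s id)) := by
    rw [toLin'_apply', toLin'_apply', range_mulVecLin, range_mulVecLin]
    exact span_mono (Set.range_comp_subset_range t (B.submatrix s id).col)
  have : Finite ((Fin r → ℤ) ⧸ LinearMap.range (toLin' (B.submatrix s t))) :=
    Nat.finite_of_card_ne_zero (by rw [hcard]; exact Int.natAbs_ne_zero.mpr hdet)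
  have hsurj := factor_surjective hle
  have : Finite ((Fin r → ℤ) ⧸ LinearMap.range (toLin' (B.submatrix s id))) :=
    Finite.of_surjective _ hsurj
  refine ⟨r, s, t, hdet, ?_⟩
  calc _ ≤ Nat.card ((Fin r → ℤ) ⧸ LinearMap.range (toLin' (B.submatrix s id))) :=
        natCard_torsion_quotient_le B W s hker
    _ ≤ _ := Nat.card_le_card_of_surjective _ hsurj
    _ = _ := hcard

end Matrix

theorem bsign_sq (τ σ : Finset V) :
    bsign τ σ ^ 2 = if τ ⊆ σ ∧ τ.card + 1 = σ.card then 1 else 0 := by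
  unfold bsign
  split_ifs <;> simp [← pow_mul, pow_mul']

open Finset in
theorem sum_sq_gbdryZ_le {ι : Type*} [Fintype ι] {d : ℕ} (r : ι → SimpIdx V d)
    (hr : Function.Injective r) (σ : SimpIdx V (d + 1)) :
    ∑ i, gbdryZ V d (r i) σ ^ 2 ≤ d + 2 := by
  classical
  have hterm : ∀ i, gbdryZ V d (r i) σ ^ 2 = if (r i : Finset V) ⊆ σ then 1 else 0 := fun i => by
    simp only [gbdryZ, bsign_sq, (r i).2, σ.2, and_true]
  have hcard : #{i | (r i : Finset V) ⊆ σ} ≤ #((σ : Finset V).powersetCard (d + 1)) :=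
    card_le_card_of_injOn (fun i => (r i : Finset V))
      (fun i hi => by simpa [mem_powersetCard, (r i).2] using hi)
      (fun i _ j _ hij => hr (Subtype.ext hij))
  rw [card_powersetCard, σ.2, Nat.choose_succ_self_right] at hcard
  rw [sum_congr rfl fun i _ => hterm i, sum_boole]
  exact_mod_cast hcard

theorem card_le_nface {V : Type} (K : SComplex V) {ι : Type*} [Fintype ι] {d : ℕ}
    (r : ι → SimpIdx V d) (hr : Function.Injective r) (hrK : ∀ i, (r i : Finset V) ∈ K.faces) :
    Fintype.card ι ≤ nface K d := by
  classical
  exact Finset.card_le_card_of_injOn (fun i => (r i : Finset V))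
    (fun i _ => Finset.mem_filter.mpr ⟨hrK i, (r i).2⟩) (fun i _ j _ hij => hr (Subtype.ext hij))

theorem natAbs_det_submatrix_gbdryZ_le {d k : ℕ} (r : Fin k → SimpIdx V d)
    (c : Fin k → SimpIdx V (d + 1)) (hr : Function.Injective r) :
    (((gbdryZ V d).submatrix r c).det.natAbs : ℝ) ≤ √((d : ℝ) + 2) ^ k := by
  let A := ((gbdryZ V d).submatrix r c).map (Int.castRingHom ℝ)
  calc (((gbdryZ V d).submatrix r c).det.natAbs : ℝ) = |A.det| := by
        rw [Nat.cast_natAbs, Int.cast_abs]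
        exact congrArg _ (RingHom.map_det (Int.castRingHom ℝ) _)
    _ ≤ ∏ j, √(∑ i, A i j ^ 2) := Matrix.abs_det_le_prod_sqrt_sum_sq A
    _ ≤ ∏ _j : Fin k, √((d : ℝ) + 2) := by
        refine Finset.prod_le_prod (fun _ _ => Real.sqrt_nonneg _) fun j _ => ?_
        have h := sum_sq_gbdryZ_le r hr (c j)
        simp only [A, Matrix.map_apply, Matrix.submatrix_apply, Int.coe_castRingHom]
        exact Real.sqrt_le_sqrt (by exact_mod_cast h)
    _ = √((d : ℝ) + 2) ^ k := by simp

theorem natAbs_det_submatrix_gbdryZ_le_nface (K : SComplex V) {d k : ℕ}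
    (r : Fin k → SimpIdx V d) (c : Fin k → SimpIdx V (d + 1))
    (hr : Function.Injective r) (hc : Function.Injective c)
    (hrK : ∀ i, (r i : Finset V) ∈ K.faces) (hcK : ∀ i, (c i : Finset V) ∈ K.faces) :
    (((gbdryZ V d).submatrix r c).det.natAbs : ℝ) ≤
      √((d : ℝ) + 2) ^ min (nface K d) (nface K (d + 1)) := by
  have hk : k ≤ min (nface K d) (nface K (d + 1)) := by
    simpa using le_min (card_le_nface K r hr hrK) (card_le_nface K c hc hcK)
  refine (natAbs_det_submatrix_gbdryZ_le r c hr).trans (pow_le_pow_right₀ ?_ hk)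
  exact Real.one_le_sqrt.mpr (by linarith [d.cast_nonneg (α := ℝ)])

theorem mem_faces_of_det_submatrix_relBdryZ_ne_zero {V : Type} [LinearOrder V]
    {L L₀ : SComplex V} {d k : ℕ} {s : Fin k → SimpIdx V d} {t : Fin k → SimpIdx V (d + 1)}
    (h : ((relBdryZ L L₀ d).submatrix s t).det ≠ 0) :
    (∀ i, (s i : Finset V) ∈ L.faces ∧ (s i : Finset V) ∉ L₀.faces) ∧
      ∀ j, (t j : Finset V) ∈ L.faces ∧ (t j : Finset V) ∉ L₀.faces := by
  refine ⟨fun i => ?_, fun j => ?_⟩ <;> by_contra hmem <;> apply h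
  · exact Matrix.det_eq_zero_of_row_eq_zero i fun j => if_neg fun hij => hmem ⟨hij.1, hij.2.1⟩
  · exact Matrix.det_eq_zero_of_column_eq_zero j fun i => if_neg fun hij => hmem hij.2.2
/-- **Hadamard bound on boundary submatrices and relative torsion.** Every square
submatrix of the boundary matrix `∂[K]` (from `(d+1)`-simplices to `d`-simplices,
whose columns have `d+2` entries equal to `±1`) has determinant of absolute value
at most `(√(d+2))ⁿ` where `n = min{n_d, n_{d+1}}`; consequently the cardinality of
the torsion subgroup of any relative homology group `H_d(L, L₀; ℤ)` of `K` is at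
most `(√(d+2))ⁿ`. -/
theorem hadamard_bound_boundary_and_torsion
    {V : Type} [Fintype V] [LinearOrder V] (K : SComplex V) (d : ℕ) :
    (∀ (k : ℕ) (r : Fin k → SimpIdx V d) (c : Fin k → SimpIdx V (d + 1)),
      Function.Injective r → Function.Injective c →
      (∀ i, ((r i : Finset V)) ∈ K.faces) → (∀ i, ((c i : Finset V)) ∈ K.faces) →
      ((((gbdryZ V d).submatrix r c).det).natAbs : ℝ) ≤
        Real.sqrt ((d : ℝ) + 2) ^ (min (nface K d) (nface K (d + 1)))) ∧
    (∀ L L₀ : SComplex V, L.faces ⊆ K.faces → L₀.faces ⊆ L.faces →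
      ((relTorsionCard L L₀ d : ℕ) : ℝ) ≤
        Real.sqrt ((d : ℝ) + 2) ^ (min (nface K d) (nface K (d + 1)))) := by
  refine ⟨fun _ r c => natAbs_det_submatrix_gbdryZ_le_nface K r c, fun L L₀ hLK _ => ?_⟩
  obtain ⟨r, s, t, hdet, hcard⟩ :=
    (relBdryZ L L₀ d).exists_det_submatrix_ne_zero_natCard_torsion_le (relKer L L₀ d)
  obtain ⟨hs, ht⟩ := mem_faces_of_det_submatrix_relBdryZ_ne_zero hdet
  have hrestrict : (relBdryZ L L₀ d).submatrix s t = (gbdryZ V d).submatrix s t := by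
    ext i j
    exact if_pos ⟨(hs i).1, (hs i).2, (ht j).1, (ht j).2⟩
  rw [hrestrict] at hdet hcard
  obtain ⟨hs_inj, ht_inj⟩ := Matrix.injective_of_det_submatrix_ne_zero hdet
  calc ((relTorsionCard L L₀ d : ℕ) : ℝ) ≤ ((gbdryZ V d).submatrix s t).det.natAbs :=
        Nat.cast_le.mpr hcard
    _ ≤ _ := natAbs_det_submatrix_gbdryZ_le_nface K s t hs_inj ht_inj
        (fun i => hLK (hs i).1) (fun j => hLK (ht j).1)
end

section
/- Let K be a d-dimensional simplicial complex and let c be a proper coloring of K. Then the pattern complex K_c satisfies λ_min(L_{d-1}^{up}[K]) = λ_min(L_{d-1}^{up}[K_c]). -/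
open Matrix

variable {V : Type} [Fintype V] [LinearOrder V]

set_option linter.unusedSectionVars false
set_option linter.unusedVariables false
set_option maxHeartbeats 1000000

section SignAux

variable {W : Type} [Fintype W] [LinearOrder W]

/-- Sign of the coloring-inversions on a finite vertex set. -/
def ceps (c : V → W) (s : Finset V) : ℤ :=
  (-1) ^ ((s ×ˢ s).filter (fun p => p.1 < p.2 ∧ c p.2 < c p.1)).card

lemma ceps_mul_self (c : V → W) (s : Finset V) : ceps c s * ceps c s = 1 := by
  unfold ceps; rw [← pow_add]; exact Even.neg_one_pow ⟨_, rfl⟩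

lemma image_erase_of_injOn (c : V → W) {s : Finset V} (hc : Set.InjOn c ↑s) {v : V}
    (hv : v ∈ s) : Finset.image c (s.erase v) = (Finset.image c s).erase (c v) := by
  ext w
  simp only [Finset.mem_image, Finset.mem_erase]
  constructor
  · rintro ⟨u, ⟨hne, hu⟩, rfl⟩
    exact ⟨fun h => hne (hc hu hv h), u, hu, rfl⟩
  · rintro ⟨hne, u, hu, rfl⟩
    exact ⟨u, ⟨fun h => hne (by rw [h]), hu⟩, rfl⟩

lemma bsign_erase (s : Finset V) (v : V) (hv : v ∈ s) :
    bsign (s.erase v) s = (-1) ^ ((s.filter (· < v)).card) := by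
  have hsd : s \ s.erase v = {v} := by
    ext x
    simp only [Finset.mem_sdiff, Finset.mem_erase, Finset.mem_singleton]
    constructor
    · rintro ⟨hx, h⟩
      by_contra hne
      exact h ⟨hne, hx⟩
    · rintro rfl
      exact ⟨hv, fun h => h.1 rfl⟩
  rw [bsign, if_pos ⟨Finset.erase_subset _ _, Finset.card_erase_add_one hv⟩]
  congr 1
  rw [hsd]
  congr 1
  apply Finset.filter_congr
  intro w _
  simp

lemma ceps_insert (c : V → W) (S : Finset V) (v : V) (hv : v ∉ S) :
    ceps c (insert v S) = ceps c S *
      (-1) ^ ((S.filter (fun w => w < v ∧ c v < c w)).card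
            + (S.filter (fun w => v < w ∧ c w < c v)).card) := by
  unfold ceps
  rw [← pow_add]
  congr 1
  rw [Finset.card_filter, Finset.card_filter, Finset.card_filter, Finset.card_filter,
    Finset.sum_product, Finset.sum_product, Finset.sum_insert hv]
  simp only [Finset.sum_insert hv]
  have h0 : (if v < v ∧ c v < c v then (1:ℕ) else 0) = 0 := by simp
  rw [h0, Finset.sum_add_distrib]
  omega

lemma rank_split (c : V → W) (S : Finset V) (v : V) (hv : v ∉ S)
    (hinj : ∀ w ∈ S, c w ≠ c v) :
    ((insert v S).filter (· < v)).card
      = (S.filter (fun w => w < v ∧ c w < c v)).card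
      + (S.filter (fun w => w < v ∧ c v < c w)).card := by
  rw [Finset.filter_insert, if_neg (lt_irrefl v), Finset.card_filter, Finset.card_filter,
    Finset.card_filter, ← Finset.sum_add_distrib]
  apply Finset.sum_congr rfl
  intro w hw
  have hne := hinj w hw
  rcases lt_trichotomy (c w) (c v) with h | h | h
  · simp [h, asymm h]
  · exact absurd h hne
  · simp [h, asymm h]

lemma rankc_split (c : V → W) (S : Finset V) (v : V) (hv : v ∉ S)
    (hinj : Set.InjOn c ↑(insert v S)) :
    ((Finset.image c (insert v S)).filter (· < c v)).card
      = (S.filter (fun w => w < v ∧ c w < c v)).card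
      + (S.filter (fun w => v < w ∧ c w < c v)).card := by
  rw [Finset.card_filter, Finset.card_filter, Finset.card_filter,
    Finset.sum_image (fun x hx y hy h => hinj hx hy h), Finset.sum_insert hv,
    ← Finset.sum_add_distrib]
  have h0 : (if c v < c v then (1:ℕ) else 0) = 0 := by simp
  rw [h0, zero_add]
  apply Finset.sum_congr rfl
  intro w hw
  have hne : w ≠ v := fun h => hv (h ▸ hw)
  rcases lt_trichotomy w v with h | h | h
  · simp [h, asymm h]
  · exact absurd h hne
  · simp [h, asymm h]

lemma sign_key (c : V → W) (s : Finset V) (hc : Set.InjOn c ↑s) (v : V) (hv : v ∈ s) :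
    (-1:ℤ) ^ (((Finset.image c s).filter (· < c v)).card) * ceps c (s.erase v)
      = (-1) ^ ((s.filter (· < v)).card) * ceps c s := by
  set S := s.erase v with hS
  have hvS : v ∉ S := Finset.notMem_erase _ _
  have hins : insert v S = s := Finset.insert_erase hv
  have hinj : Set.InjOn c ↑(insert v S) := by rw [hins]; exact hc
  have hne : ∀ w ∈ S, c w ≠ c v := by
    intro w hw h
    exact (Finset.mem_erase.1 hw).1 (hc (Finset.mem_of_mem_erase hw) hv h)
  rw [← hins, rankc_split c S v hvS hinj, rank_split c S v hvS hne, ceps_insert c S v hvS]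
  set A := (S.filter (fun w => w < v ∧ c w < c v)).card
  set B := (S.filter (fun w => w < v ∧ c v < c w)).card
  set C := (S.filter (fun w => v < w ∧ c w < c v)).card
  have : (-1:ℤ) ^ (A + C) = (-1) ^ (A + B) * (-1) ^ (B + C) := by
    rw [← pow_add]
    have h2 : A + B + (B + C) = (A + C) + 2 * B := by ring
    rw [h2]
    conv_rhs => rw [pow_add, pow_mul]
    norm_num
  rw [this]
  ring

lemma bsign_image (c : V → W) {τ σ : Finset V} (hc : Set.InjOn c ↑σ) (hτ : τ ⊆ σ)
    (hcard : τ.card + 1 = σ.card) :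
    bsign (Finset.image c τ) (Finset.image c σ) = ceps c τ * ceps c σ * bsign τ σ := by
  have hsd : (σ \ τ).card = 1 := by
    rw [Finset.card_sdiff_of_subset hτ]; omega
  obtain ⟨v, hv⟩ := Finset.card_eq_one.1 hsd
  have hvστ : v ∈ σ \ τ := by rw [hv]; exact Finset.mem_singleton_self v
  have hvσ : v ∈ σ := (Finset.mem_sdiff.1 hvστ).1
  have hvτ : v ∉ τ := (Finset.mem_sdiff.1 hvστ).2
  have hτe : τ = σ.erase v := by
    apply Finset.eq_of_subset_of_card_le (Finset.subset_erase.2 ⟨hτ, hvτ⟩)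
    rw [Finset.card_erase_of_mem hvσ]; omega
  subst hτe
  have hcvmem : c v ∈ Finset.image c σ := Finset.mem_image_of_mem c hvσ
  rw [image_erase_of_injOn c hc hvσ, bsign_erase _ _ hcvmem, bsign_erase _ _ hvσ]
  have h := sign_key c σ hc v hvσ
  have h2 := ceps_mul_self c (σ.erase v)
  calc (-1:ℤ) ^ ((Finset.image c σ).filter (· < c v)).card
      = (-1) ^ ((Finset.image c σ).filter (· < c v)).card
          * (ceps c (σ.erase v) * ceps c (σ.erase v)) := by rw [h2, mul_one]
    _ = ((-1) ^ ((Finset.image c σ).filter (· < c v)).card * ceps c (σ.erase v))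
          * ceps c (σ.erase v) := by ring
    _ = ((-1) ^ (σ.filter (· < v)).card * ceps c σ) * ceps c (σ.erase v) := by rw [h]
    _ = ceps c (σ.erase v) * ceps c σ * (-1) ^ (σ.filter (· < v)).card := by ring

end SignAux

section GramAux

lemma bsign_eq_zero_of_not_subset {τ σ : Finset V} (h : ¬ τ ⊆ σ) : bsign τ σ = 0 := by
  rw [bsign, if_neg (fun hc => h hc.1)]

lemma bdry_apply (K : SComplex V) (d : ℕ) (τ : SimpIdx V d) (σ : SimpIdx V (d+1)) :
    K.bdry d τ σ = (if (τ : Finset V) ∈ K.faces then (1:ℝ) else 0)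
      * ((bsign (τ : Finset V) (σ : Finset V) : ℤ) : ℝ)
      * (if (σ : Finset V) ∈ K.faces then (1:ℝ) else 0) := by
  simp [SComplex.bdry, SComplex.ind, Matrix.mul_diagonal, Matrix.diagonal_mul,
    gbdry, gbdryZ, Matrix.map_apply]

lemma gram_apply_zero (K : SComplex V) (d : ℕ) {σ σ' : SimpIdx V (d+1)}
    (h : (σ : Finset V) ∉ K.faces ∨ (σ' : Finset V) ∉ K.faces) :
    ((K.bdry d)ᵀ * K.bdry d) σ σ' = 0 := by
  rw [Matrix.mul_apply]
  apply Finset.sum_eq_zero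
  intro τ _
  rw [Matrix.transpose_apply, bdry_apply, bdry_apply]
  rcases h with h | h <;> rw [if_neg h] <;> ring

lemma gram_apply_mem (K : SComplex V) (d : ℕ) {σ σ' : SimpIdx V (d+1)}
    (hσ : (σ : Finset V) ∈ K.faces) (hσ' : (σ' : Finset V) ∈ K.faces) :
    ((K.bdry d)ᵀ * K.bdry d) σ σ'
      = ∑ τ : SimpIdx V d,
        ((bsign (τ : Finset V) (σ : Finset V) * bsign (τ : Finset V) (σ' : Finset V) : ℤ) : ℝ) := by
  rw [Matrix.mul_apply]
  apply Finset.sum_congr rfl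
  intro τ _
  rw [Matrix.transpose_apply, bdry_apply, bdry_apply, if_pos hσ, if_pos hσ']
  by_cases hτ : (τ : Finset V) ∈ K.faces
  · rw [if_pos hτ]; push_cast; ring
  · by_cases hsub : (τ : Finset V) ⊆ (σ : Finset V)
    · exact absurd (K.down_closed _ hσ _ hsub (Finset.card_pos.1 (by rw [τ.2]; omega))) hτ
    · rw [bsign_eq_zero_of_not_subset hsub, if_neg hτ]; push_cast; ring

end GramAux

section Transform

variable {W : Type} [Fintype W] [LinearOrder W]

lemma pull_spec (c : V → W) {σ : Finset V} (hc : Set.InjOn c ↑σ) {t : Finset W}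
    (ht : t ⊆ Finset.image c σ) :
    Finset.image c (σ.filter (fun v => c v ∈ t)) = t
      ∧ (σ.filter (fun v => c v ∈ t)).card = t.card := by
  have himg : Finset.image c (σ.filter (fun v => c v ∈ t)) = t := by
    ext w
    simp only [Finset.mem_image, Finset.mem_filter]
    constructor
    · rintro ⟨v, ⟨hvσ, hvt⟩, rfl⟩; exact hvt
    · intro hw
      obtain ⟨v, hvσ, rfl⟩ := Finset.mem_image.1 (ht hw)
      exact ⟨v, ⟨hvσ, hw⟩, rfl⟩
  refine ⟨himg, ?_⟩
  have h := Finset.card_image_of_injOn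
    (hc.mono (Finset.coe_subset.2 (Finset.filter_subset (fun v => c v ∈ t) σ)))
  rw [himg] at h
  exact h.symm

lemma gramZ_image (c : V → W) (K : SComplex V) (d : ℕ)
    (hinj : ∀ s ∈ K.faces, Set.InjOn c ↑s)
    (huniq : ∀ t ∈ K.faces, ∀ t' ∈ K.faces, t.card = d + 1 → t'.card = d + 1 →
      Finset.image c t = Finset.image c t' → t = t')
    {σ σ' : SimpIdx V (d+1)} (hσ : (σ : Finset V) ∈ K.faces)
    (hσ' : (σ' : Finset V) ∈ K.faces) :
    ∑ τ' : SimpIdx W d,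
        bsign (τ' : Finset W) (Finset.image c (σ : Finset V))
          * bsign (τ' : Finset W) (Finset.image c (σ' : Finset V))
      = ceps c (σ : Finset V) * ceps c (σ' : Finset V)
        * ∑ τ : SimpIdx V d, bsign (τ : Finset V) (σ : Finset V)
            * bsign (τ : Finset V) (σ' : Finset V) := by
  have hcσ := σ.2
  have hcσ' := σ'.2
  have hconvV : ∀ g : Finset V → ℤ, (∑ τ : SimpIdx V d, g (τ : Finset V))
      = ∑ t ∈ Finset.univ.filter (fun t : Finset V => t.card = d + 1), g t :=
    fun g => (Finset.sum_subtype _ (fun t => by simp) g).symm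
  have hconvW : ∀ g : Finset W → ℤ, (∑ τ : SimpIdx W d, g (τ : Finset W))
      = ∑ t ∈ Finset.univ.filter (fun t : Finset W => t.card = d + 1), g t :=
    fun g => (Finset.sum_subtype _ (fun t => by simp) g).symm
  rw [hconvV (fun t => bsign t (σ : Finset V) * bsign t (σ' : Finset V)),
    hconvW (fun t => bsign t (Finset.image c (σ : Finset V))
      * bsign t (Finset.image c (σ' : Finset V)))]
  set sV := Finset.univ.filter
    (fun t : Finset V => t.card = d + 1 ∧ t ⊆ (σ : Finset V) ∧ t ⊆ (σ' : Finset V)) with hsV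
  set sW := Finset.univ.filter
    (fun t : Finset W => t.card = d + 1 ∧ t ⊆ Finset.image c (σ : Finset V)
      ∧ t ⊆ Finset.image c (σ' : Finset V)) with hsW
  have hshrinkV : ∑ t ∈ Finset.univ.filter (fun t : Finset V => t.card = d + 1),
      bsign t (σ : Finset V) * bsign t (σ' : Finset V)
      = ∑ t ∈ sV, bsign t (σ : Finset V) * bsign t (σ' : Finset V) := by
    refine (Finset.sum_subset ?_ ?_).symm
    · intro t ht
      simp only [hsV, Finset.mem_filter, Finset.mem_univ, true_and] at ht ⊢
      exact ht.1
    · intro t ht ht'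
      simp only [hsV, Finset.mem_filter, Finset.mem_univ, true_and] at ht ht'
      rcases not_and_or.1 (fun h => ht' ⟨ht, h⟩) with h | h
      · rw [bsign_eq_zero_of_not_subset h, zero_mul]
      · rw [bsign_eq_zero_of_not_subset h, mul_zero]
  have hshrinkW : ∑ t ∈ Finset.univ.filter (fun t : Finset W => t.card = d + 1),
      bsign t (Finset.image c (σ : Finset V)) * bsign t (Finset.image c (σ' : Finset V))
      = ∑ t ∈ sW, bsign t (Finset.image c (σ : Finset V))
          * bsign t (Finset.image c (σ' : Finset V)) := by
    refine (Finset.sum_subset ?_ ?_).symm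
    · intro t ht
      simp only [hsW, Finset.mem_filter, Finset.mem_univ, true_and] at ht ⊢
      exact ht.1
    · intro t ht ht'
      simp only [hsW, Finset.mem_filter, Finset.mem_univ, true_and] at ht ht'
      rcases not_and_or.1 (fun h => ht' ⟨ht, h⟩) with h | h
      · rw [bsign_eq_zero_of_not_subset h, zero_mul]
      · rw [bsign_eq_zero_of_not_subset h, mul_zero]
  rw [hshrinkV, hshrinkW]
  have key : ∑ t ∈ sV, (ceps c (σ : Finset V) * ceps c (σ' : Finset V)
        * (bsign t (σ : Finset V) * bsign t (σ' : Finset V)))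
      = ∑ t ∈ sW, bsign t (Finset.image c (σ : Finset V))
          * bsign t (Finset.image c (σ' : Finset V)) := by
    refine Finset.sum_nbij' (fun t => Finset.image c t)
      (fun t => (σ : Finset V).filter (fun v => c v ∈ t)) ?_ ?_ ?_ ?_ ?_
    · intro t ht
      simp only [hsV, hsW, Finset.mem_filter, Finset.mem_univ, true_and] at ht ⊢
      obtain ⟨htc, htσ, htσ'⟩ := ht
      refine ⟨?_, Finset.image_subset_image htσ, Finset.image_subset_image htσ'⟩
      rw [Finset.card_image_of_injOn ((hinj _ hσ).mono (Finset.coe_subset.2 htσ))]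
      exact htc
    · intro t ht
      simp only [hsV, hsW, Finset.mem_filter, Finset.mem_univ, true_and] at ht ⊢
      obtain ⟨htc, htσ, htσ'⟩ := ht
      obtain ⟨himg, hcard⟩ := pull_spec c (hinj _ hσ) htσ
      obtain ⟨himg', hcard'⟩ := pull_spec c (hinj _ hσ') htσ'
      have hmem : (σ : Finset V).filter (fun v => c v ∈ t) ∈ K.faces := by
        refine K.down_closed _ hσ _ (Finset.filter_subset _ _) ?_
        rw [← Finset.card_pos, hcard, htc]; omega
      have hmem' : (σ' : Finset V).filter (fun v => c v ∈ t) ∈ K.faces := by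
        refine K.down_closed _ hσ' _ (Finset.filter_subset _ _) ?_
        rw [← Finset.card_pos, hcard', htc]; omega
      have heq := huniq _ hmem _ hmem' (by rw [hcard, htc]) (by rw [hcard', htc])
        (by rw [himg, himg'])
      exact ⟨by rw [hcard, htc], Finset.filter_subset _ _,
        heq ▸ Finset.filter_subset _ _⟩
    · intro t ht
      simp only [hsV, Finset.mem_filter, Finset.mem_univ, true_and] at ht
      obtain ⟨htc, htσ, htσ'⟩ := ht
      ext v
      simp only [Finset.mem_filter, Finset.mem_image]
      constructor
      · rintro ⟨hvσ, u, hu, hcu⟩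
        rwa [← (hinj _ hσ) (htσ hu) hvσ hcu]
      · intro hv
        exact ⟨htσ hv, v, hv, rfl⟩
    · intro t ht
      simp only [hsW, Finset.mem_filter, Finset.mem_univ, true_and] at ht
      exact (pull_spec c (hinj _ hσ) ht.2.1).1
    · intro t ht
      simp only [hsV, Finset.mem_filter, Finset.mem_univ, true_and] at ht
      obtain ⟨htc, htσ, htσ'⟩ := ht
      rw [bsign_image c (hinj _ hσ) htσ (by omega),
        bsign_image c (hinj _ hσ') htσ' (by omega)]
      have h2 := ceps_mul_self c t
      linear_combination (-(ceps c (σ : Finset V) * ceps c (σ' : Finset V)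
        * bsign t (σ : Finset V) * bsign t (σ' : Finset V))) * h2
  rw [← key, Finset.mul_sum]

end Transform

lemma eigen_comm {m n : Type} [Fintype m] [Fintype n] (A : Matrix m n ℝ) (B : Matrix n m ℝ)
    {μ : ℝ} (hμ : μ ≠ 0) (h : IsEigen (A * B) μ) : IsEigen (B * A) μ := by
  obtain ⟨x, hx, hAB⟩ := h
  refine ⟨B *ᵥ x, ?_, ?_⟩
  · intro h0
    have h1 : (A * B) *ᵥ x = 0 := by
      rw [← Matrix.mulVec_mulVec, h0, Matrix.mulVec_zero]
    rw [hAB] at h1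
    rcases smul_eq_zero.1 h1 with h | h
    · exact hμ h
    · exact hx h
  · rw [Matrix.mulVec_mulVec, Matrix.mul_assoc, ← Matrix.mulVec_mulVec, hAB,
      Matrix.mulVec_smul]


/-- Signed transfer matrix from `V`-chains to `W`-chains along a coloring. -/
noncomputable def transP {W : Type} [Fintype W] [LinearOrder W]
    (c : V → W) (K : SComplex V) (d : ℕ) :
    Matrix (SimpIdx W (d+1)) (SimpIdx V (d+1)) ℝ :=
  fun T σK => if (σK : Finset V) ∈ K.faces ∧ Finset.image c (σK : Finset V) = (T : Finset W)
    then ((ceps c (σK : Finset V) : ℤ) : ℝ) else 0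


/-- **Proper colorings preserve the spectral gap of the up-Laplacian.** Let `K` be a
`(d+1)`-dimensional simplicial complex and `c` a proper coloring of `K`: endpoints
of every edge get distinct colors, and distinct `d`-simplices get distinct color
sets. Then the pattern complex `K_c` (obtained by recoloring every face) satisfies
`λmin(L^{up}[K]) = λmin(L^{up}[K_c])` on `d`-chains. -/
theorem proper_coloring_preserves_up_spectral_gap
    {V W : Type} [Fintype V] [LinearOrder V] [Fintype W] [LinearOrder W]
    (K : SComplex V) (d : ℕ) (hdim : ∀ s ∈ K.faces, s.card ≤ d + 2)
    (c : V → W) (Kc : SComplex W)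
    (hKc : Kc.faces = K.faces.image (Finset.image c))
    (hproper₁ : ∀ e ∈ K.faces, e.card = 2 → ∀ u ∈ e, ∀ v ∈ e, u ≠ v → c u ≠ c v)
    (hproper₂ : ∀ s₁ ∈ K.faces, ∀ s₂ ∈ K.faces, s₁.card = d + 1 → s₂.card = d + 1 →
      Finset.image c s₁ = Finset.image c s₂ → s₁ = s₂) :
    specGap (K.upLap d) = specGap (Kc.upLap d) := by
  classical
  -- injectivity of the coloring on each face
  have hinj : ∀ s ∈ K.faces, Set.InjOn c ↑s := by
    intro s hs u hu v hv h
    by_contra hne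
    have hpair : ({u, v} : Finset V) ∈ K.faces := by
      refine K.down_closed s hs _ ?_ ⟨u, by simp⟩
      intro x hx
      rcases Finset.mem_insert.1 hx with rfl | hx
      · exact hu
      · rw [Finset.mem_singleton.1 hx]; exact hv
    exact hproper₁ _ hpair (Finset.card_pair hne) u (by simp) v (by simp) hne h
  have hcardim : ∀ s ∈ K.faces, (Finset.image c s).card = s.card :=
    fun s hs => Finset.card_image_of_injOn (hinj s hs)
  have himgKc : ∀ s ∈ K.faces, Finset.image c s ∈ Kc.faces := by
    intro s hs; rw [hKc]; exact Finset.mem_image_of_mem _ hs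
  have hcardimg : ∀ σK : SimpIdx V (d+1), (σK : Finset V) ∈ K.faces →
      (Finset.image c (σK : Finset V)).card = d + 1 + 1 := by
    intro σK h; rw [hcardim _ h, σK.2]
  -- injectivity of the induced map on top faces
  have htop : ∀ σ σ' : SimpIdx V (d+1), (σ : Finset V) ∈ K.faces →
      (σ' : Finset V) ∈ K.faces →
      Finset.image c (σ : Finset V) = Finset.image c (σ' : Finset V) → σ = σ' := by
    intro σ σ' hσ hσ' himg
    apply Subtype.ext
    apply Finset.eq_of_subset_of_card_le
    · intro v hv
      obtain ⟨u, hu, hune⟩ := Finset.exists_mem_ne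
        (by rw [σ.2]; omega : 1 < (σ : Finset V).card) v
      set τ : Finset V := (σ : Finset V).erase u with hτdef
      have hvτ : v ∈ τ := Finset.mem_erase.2 ⟨fun h => hune h.symm, hv⟩
      have hτσ : τ ⊆ (σ : Finset V) := Finset.erase_subset _ _
      have hτK : τ ∈ K.faces := K.down_closed _ hσ _ hτσ ⟨v, hvτ⟩
      have hτc : τ.card = d + 1 := by
        rw [hτdef, Finset.card_erase_of_mem hu, σ.2]
        omega
      have himgτ : Finset.image c τ ⊆ Finset.image c (σ' : Finset V) := by
        rw [← himg]; exact Finset.image_subset_image hτσ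
      obtain ⟨hpimg, hpcard⟩ := pull_spec c (hinj _ hσ') himgτ
      set s₂ : Finset V := (σ' : Finset V).filter (fun w => c w ∈ Finset.image c τ)
      have hs₂K : s₂ ∈ K.faces := by
        refine K.down_closed _ hσ' _ (Finset.filter_subset _ _) ?_
        rw [← Finset.card_pos, hpcard, hcardim _ hτK, hτc]; omega
      have hs₂c : s₂.card = d + 1 := by
        rw [hpcard, hcardim _ hτK, hτc]
      have heq : τ = s₂ := hproper₂ _ hτK _ hs₂K hτc hs₂c (by rw [hpimg])
      exact Finset.filter_subset _ _ (heq ▸ hvτ)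
    · rw [σ.2, σ'.2]
  -- surjectivity onto top faces of the pattern complex
  have hKctop : ∀ T : SimpIdx W (d+1), (T : Finset W) ∈ Kc.faces →
      ∃ σK : SimpIdx V (d+1), (σK : Finset V) ∈ K.faces
        ∧ Finset.image c (σK : Finset V) = (T : Finset W) := by
    intro T hT
    rw [hKc] at hT
    obtain ⟨s, hs, himg⟩ := Finset.mem_image.1 hT
    have hc1 : s.card ≤ d + 2 := hdim s hs
    have hc2 : d + 2 ≤ s.card := by
      have := Finset.card_image_le (f := c) (s := s)
      rw [himg, T.2] at this
      omega
    exact ⟨⟨s, by omega⟩, hs, himg⟩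
  -- the Gram matrices transform by signs
  have hgram : ∀ (σ σ' : SimpIdx V (d+1)) (hσ : (σ : Finset V) ∈ K.faces)
      (hσ' : (σ' : Finset V) ∈ K.faces),
      ((Kc.bdry d)ᵀ * Kc.bdry d) ⟨Finset.image c (σ : Finset V), hcardimg σ hσ⟩
          ⟨Finset.image c (σ' : Finset V), hcardimg σ' hσ'⟩
        = ((ceps c (σ : Finset V) * ceps c (σ' : Finset V) : ℤ) : ℝ)
            * ((K.bdry d)ᵀ * K.bdry d) σ σ' := by
    intro σ σ' hσ hσ'
    rw [gram_apply_mem Kc d (himgKc _ hσ) (himgKc _ hσ'), gram_apply_mem K d hσ hσ']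
    have hz := gramZ_image c K d hinj hproper₂ hσ hσ'
    rw [← Int.cast_sum, ← Int.cast_sum]
    rw [show (∑ τ' : SimpIdx W d,
        bsign (τ' : Finset W) (Finset.image c (σ : Finset V))
          * bsign (τ' : Finset W) (Finset.image c (σ' : Finset V))) =
        ceps c (σ : Finset V) * ceps c (σ' : Finset V)
        * ∑ τ : SimpIdx V d, bsign (τ : Finset V) (σ : Finset V)
            * bsign (τ : Finset V) (σ' : Finset V) from hz]
    push_cast
    ring
  have hcepsne : ∀ s : Finset V, ((ceps c s : ℤ) : ℝ) ≠ 0 := by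
    intro s
    have : ceps c s ≠ 0 := by
      unfold ceps; exact pow_ne_zero _ (by norm_num)
    exact_mod_cast this
  -- intertwining identities
  have hPG : ((Kc.bdry d)ᵀ * Kc.bdry d) * transP c K d
      = transP c K d * ((K.bdry d)ᵀ * K.bdry d) := by
    ext T' σK
    rw [Matrix.mul_apply, Matrix.mul_apply]
    by_cases hσK : (σK : Finset V) ∈ K.faces
    · have hL : ∑ T, ((Kc.bdry d)ᵀ * Kc.bdry d) T' T * transP c K d T σK
          = ((Kc.bdry d)ᵀ * Kc.bdry d) T'
              ⟨Finset.image c (σK : Finset V), hcardimg σK hσK⟩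
              * ((ceps c (σK : Finset V) : ℤ) : ℝ) := by
        rw [Finset.sum_eq_single (⟨Finset.image c (σK : Finset V), hcardimg σK hσK⟩ :
            SimpIdx W (d+1))]
        · rw [transP, if_pos ⟨hσK, rfl⟩]
        · intro T _ hne
          rw [transP]
          rw [if_neg, mul_zero]
          rintro ⟨-, himg⟩
          exact hne (Subtype.ext himg.symm)
        · intro h; exact absurd (Finset.mem_univ _) h
      rw [hL]
      by_cases hex : ∃ σ₀ : SimpIdx V (d+1), (σ₀ : Finset V) ∈ K.faces
          ∧ Finset.image c (σ₀ : Finset V) = (T' : Finset W)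
      · obtain ⟨σ₀, hσ₀, himg₀⟩ := hex
        have hR : ∑ σ'', transP c K d T' σ'' * ((K.bdry d)ᵀ * K.bdry d) σ'' σK
            = ((ceps c (σ₀ : Finset V) : ℤ) : ℝ) * ((K.bdry d)ᵀ * K.bdry d) σ₀ σK := by
          rw [Finset.sum_eq_single σ₀]
          · rw [transP, if_pos ⟨hσ₀, himg₀⟩]
          · intro σ'' _ hne
            rw [transP]
            rw [if_neg, zero_mul]
            rintro ⟨hσ'', himg''⟩
            exact hne (htop σ'' σ₀ hσ'' hσ₀ (himg''.trans himg₀.symm))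
          · intro h; exact absurd (Finset.mem_univ _) h
        rw [hR]
        have hT'eq : T' = ⟨Finset.image c (σ₀ : Finset V), hcardimg σ₀ hσ₀⟩ :=
          Subtype.ext himg₀.symm
        rw [hT'eq, hgram σ₀ σK hσ₀ hσK]
        have h2 : ((ceps c (σK : Finset V) : ℤ) : ℝ)
            * ((ceps c (σK : Finset V) : ℤ) : ℝ) = 1 := by
          exact_mod_cast ceps_mul_self c (σK : Finset V)
        push_cast
        linear_combination (((ceps c (σ₀ : Finset V) : ℤ) : ℝ)
          * ((K.bdry d)ᵀ * K.bdry d) σ₀ σK) * h2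
      · have hR : ∑ σ'', transP c K d T' σ'' * ((K.bdry d)ᵀ * K.bdry d) σ'' σK = 0 := by
          apply Finset.sum_eq_zero
          intro σ'' _
          rw [transP]
          rw [if_neg, zero_mul]
          intro hcond
          exact hex ⟨σ'', hcond⟩
        rw [hR]
        have hz : ((Kc.bdry d)ᵀ * Kc.bdry d) T'
            ⟨Finset.image c (σK : Finset V), hcardimg σK hσK⟩ = 0 := by
          apply gram_apply_zero
          left
          intro hmem
          exact hex (hKctop T' hmem)
        rw [hz, zero_mul]
    · have hL : ∑ T, ((Kc.bdry d)ᵀ * Kc.bdry d) T' T * transP c K d T σK = 0 := by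
        apply Finset.sum_eq_zero
        intro T _
        rw [transP]
        rw [if_neg (fun h => hσK h.1), mul_zero]
      have hR : ∑ σ'', transP c K d T' σ'' * ((K.bdry d)ᵀ * K.bdry d) σ'' σK = 0 := by
        apply Finset.sum_eq_zero
        intro σ'' _
        rw [gram_apply_zero K d (Or.inr hσK), mul_zero]
      rw [hL, hR]
  have hGQ : ((K.bdry d)ᵀ * K.bdry d) * (transP c K d)ᵀ
      = (transP c K d)ᵀ * ((Kc.bdry d)ᵀ * Kc.bdry d) := by
    ext σ' T
    rw [Matrix.mul_apply, Matrix.mul_apply]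
    by_cases hex : ∃ σ₀ : SimpIdx V (d+1), (σ₀ : Finset V) ∈ K.faces
        ∧ Finset.image c (σ₀ : Finset V) = (T : Finset W)
    · obtain ⟨σ₀, hσ₀, himg₀⟩ := hex
      have hL : ∑ σ'', ((K.bdry d)ᵀ * K.bdry d) σ' σ'' * (transP c K d)ᵀ σ'' T
          = ((K.bdry d)ᵀ * K.bdry d) σ' σ₀ * ((ceps c (σ₀ : Finset V) : ℤ) : ℝ) := by
        rw [Finset.sum_eq_single σ₀]
        · rw [Matrix.transpose_apply, transP, if_pos ⟨hσ₀, himg₀⟩]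
        · intro σ'' _ hne
          rw [Matrix.transpose_apply, transP]
          rw [if_neg, mul_zero]
          rintro ⟨hσ'', himg''⟩
          exact hne (htop σ'' σ₀ hσ'' hσ₀ (himg''.trans himg₀.symm))
        · intro h; exact absurd (Finset.mem_univ _) h
      rw [hL]
      by_cases hσ' : (σ' : Finset V) ∈ K.faces
      · have hR : ∑ T'', (transP c K d)ᵀ σ' T'' * ((Kc.bdry d)ᵀ * Kc.bdry d) T'' T
            = ((ceps c (σ' : Finset V) : ℤ) : ℝ)
              * ((Kc.bdry d)ᵀ * Kc.bdry d)
                ⟨Finset.image c (σ' : Finset V), hcardimg σ' hσ'⟩ T := by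
          rw [Finset.sum_eq_single (⟨Finset.image c (σ' : Finset V), hcardimg σ' hσ'⟩ :
              SimpIdx W (d+1))]
          · rw [Matrix.transpose_apply, transP, if_pos ⟨hσ', rfl⟩]
          · intro T'' _ hne
            rw [Matrix.transpose_apply, transP]
            rw [if_neg, zero_mul]
            rintro ⟨-, himg''⟩
            exact hne (Subtype.ext himg''.symm)
          · intro h; exact absurd (Finset.mem_univ _) h
        rw [hR]
        have hTeq : T = ⟨Finset.image c (σ₀ : Finset V), hcardimg σ₀ hσ₀⟩ :=
          Subtype.ext himg₀.symm
        rw [hTeq, hgram σ' σ₀ hσ' hσ₀]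
        have h2 : ((ceps c (σ' : Finset V) : ℤ) : ℝ)
            * ((ceps c (σ' : Finset V) : ℤ) : ℝ) = 1 := by
          exact_mod_cast ceps_mul_self c (σ' : Finset V)
        push_cast
        linear_combination (-(((ceps c (σ₀ : Finset V) : ℤ) : ℝ)
          * ((K.bdry d)ᵀ * K.bdry d) σ' σ₀)) * h2
      · have hR : ∑ T'', (transP c K d)ᵀ σ' T'' * ((Kc.bdry d)ᵀ * Kc.bdry d) T'' T
            = 0 := by
          apply Finset.sum_eq_zero
          intro T'' _
          rw [Matrix.transpose_apply, transP]
          rw [if_neg (fun h => hσ' h.1), zero_mul]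
        rw [hR, gram_apply_zero K d (Or.inl hσ'), zero_mul]
    · have hL : ∑ σ'', ((K.bdry d)ᵀ * K.bdry d) σ' σ'' * (transP c K d)ᵀ σ'' T = 0 := by
        apply Finset.sum_eq_zero
        intro σ'' _
        rw [Matrix.transpose_apply, transP]
        rw [if_neg, mul_zero]
        intro hcond
        exact hex ⟨σ'', hcond⟩
      have hTKc : (T : Finset W) ∉ Kc.faces := fun hmem => hex (hKctop T hmem)
      have hR : ∑ T'', (transP c K d)ᵀ σ' T'' * ((Kc.bdry d)ᵀ * Kc.bdry d) T'' T = 0 := by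
        apply Finset.sum_eq_zero
        intro T'' _
        rw [gram_apply_zero Kc d (Or.inr hTKc), mul_zero]
      rw [hL, hR]
  -- the sets of nonzero eigenvalues of the two Gram matrices agree
  have hsets : {μ : ℝ | μ ≠ 0 ∧ IsEigen ((K.bdry d)ᵀ * K.bdry d) μ}
      = {μ : ℝ | μ ≠ 0 ∧ IsEigen ((Kc.bdry d)ᵀ * Kc.bdry d) μ} := by
    ext μ
    simp only [Set.mem_setOf_eq]
    constructor
    · rintro ⟨hμ, x, hx, hGx⟩
      refine ⟨hμ, transP c K d *ᵥ x, ?_, ?_⟩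
      · have hsupp : ∀ σ0 : SimpIdx V (d+1), (σ0 : Finset V) ∉ K.faces → x σ0 = 0 := by
          intro σ0 h0
          have h1 : (((K.bdry d)ᵀ * K.bdry d) *ᵥ x) σ0 = 0 := by
            simp only [Matrix.mulVec, dotProduct]
            apply Finset.sum_eq_zero
            intro σ'' _
            rw [gram_apply_zero K d (Or.inl h0), zero_mul]
          rw [hGx] at h1
          have h2 : μ * x σ0 = 0 := h1
          rcases mul_eq_zero.1 h2 with h | h
          · exact absurd h hμ
          · exact h
        obtain ⟨σ0, hx0⟩ := Function.ne_iff.1 hx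
        have hσ0 : (σ0 : Finset V) ∈ K.faces := by
          by_contra h; exact hx0 (hsupp σ0 h)
        intro hy0
        have hval : (transP c K d *ᵥ x) ⟨Finset.image c (σ0 : Finset V), hcardimg σ0 hσ0⟩
            = ((ceps c (σ0 : Finset V) : ℤ) : ℝ) * x σ0 := by
          simp only [Matrix.mulVec, dotProduct]
          rw [Finset.sum_eq_single σ0]
          · rw [transP, if_pos ⟨hσ0, rfl⟩]
          · intro σ'' _ hne
            rw [transP]
            rw [if_neg, zero_mul]
            rintro ⟨hσ'', himg''⟩
            exact hne (htop σ'' σ0 hσ'' hσ0 himg'')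
          · intro h; exact absurd (Finset.mem_univ _) h
        rw [hy0] at hval
        have h3 : (0 : ℝ) = ((ceps c (σ0 : Finset V) : ℤ) : ℝ) * x σ0 := hval
        rcases mul_eq_zero.1 h3.symm with h | h
        · exact hcepsne _ h
        · exact hx0 h
      · rw [Matrix.mulVec_mulVec, hPG, ← Matrix.mulVec_mulVec, hGx, Matrix.mulVec_smul]
    · rintro ⟨hμ, y, hy, hGy⟩
      refine ⟨hμ, (transP c K d)ᵀ *ᵥ y, ?_, ?_⟩
      · have hsupp : ∀ T : SimpIdx W (d+1), (T : Finset W) ∉ Kc.faces → y T = 0 := by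
          intro T h0
          have h1 : (((Kc.bdry d)ᵀ * Kc.bdry d) *ᵥ y) T = 0 := by
            simp only [Matrix.mulVec, dotProduct]
            apply Finset.sum_eq_zero
            intro T'' _
            rw [gram_apply_zero Kc d (Or.inl h0), zero_mul]
          rw [hGy] at h1
          have h2 : μ * y T = 0 := h1
          rcases mul_eq_zero.1 h2 with h | h
          · exact absurd h hμ
          · exact h
        obtain ⟨T0, hy0⟩ := Function.ne_iff.1 hy
        have hT0 : (T0 : Finset W) ∈ Kc.faces := by
          by_contra h; exact hy0 (hsupp T0 h)
        obtain ⟨σ₀, hσ₀, himg₀⟩ := hKctop T0 hT0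
        intro hx0
        have hval : ((transP c K d)ᵀ *ᵥ y) σ₀
            = ((ceps c (σ₀ : Finset V) : ℤ) : ℝ) * y T0 := by
          simp only [Matrix.mulVec, dotProduct]
          rw [Finset.sum_eq_single T0]
          · rw [Matrix.transpose_apply, transP, if_pos ⟨hσ₀, himg₀⟩]
          · intro T'' _ hne
            rw [Matrix.transpose_apply, transP]
            rw [if_neg, zero_mul]
            rintro ⟨-, himg''⟩
            exact hne (Subtype.ext (himg''.symm.trans himg₀))
          · intro h; exact absurd (Finset.mem_univ _) h
        rw [hx0] at hval
        have h3 : (0 : ℝ) = ((ceps c (σ₀ : Finset V) : ℤ) : ℝ) * y T0 := hval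
        rcases mul_eq_zero.1 h3.symm with h | h
        · exact hcepsne _ h
        · exact hy0 h
      · rw [Matrix.mulVec_mulVec, hGQ, ← Matrix.mulVec_mulVec, hGy, Matrix.mulVec_smul]
  -- conclude via `AAᵀ` vs `AᵀA`
  have e1 : {μ : ℝ | μ ≠ 0 ∧ IsEigen (K.bdry d * (K.bdry d)ᵀ) μ}
      = {μ : ℝ | μ ≠ 0 ∧ IsEigen ((K.bdry d)ᵀ * K.bdry d) μ} := by
    ext μ
    exact ⟨fun ⟨h0, h⟩ => ⟨h0, eigen_comm _ _ h0 h⟩,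
      fun ⟨h0, h⟩ => ⟨h0, eigen_comm _ _ h0 h⟩⟩
  have e2 : {μ : ℝ | μ ≠ 0 ∧ IsEigen (Kc.bdry d * (Kc.bdry d)ᵀ) μ}
      = {μ : ℝ | μ ≠ 0 ∧ IsEigen ((Kc.bdry d)ᵀ * Kc.bdry d) μ} := by
    ext μ
    exact ⟨fun ⟨h0, h⟩ => ⟨h0, eigen_comm _ _ h0 h⟩,
      fun ⟨h0, h⟩ => ⟨h0, eigen_comm _ _ h0 h⟩⟩
  simp only [specGap, SComplex.upLap]
  rw [e1, hsets, ← e2]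
end
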